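/- arXiv:2405.14499 — 6 statements merged into one kernel-verified Lean document; each statement's English description precedes it below -/
import Mathlib

section
/- In model M, assume C = 0 and R ≥ 0. Then every feasible solution satisfies z ≤ R B Σ_{i∈I'} E_i ( S_i + Σ_{t=2}^{T} E[a_i^(t)] ). -/
/-- A scenario tree over stages `1,…,T`: finite nonempty node sets `N t`,
a singleton root stage, a parent map, and node probabilities with
`π(root) = 1` and the conservation property. -/
structure ScenarioTree (T : ℕ) where
  N : ℕ → Finset ℕ
  pa : ℕ → ℕ → ℕ
  prob : ℕ → ℕ → ℝ
  root : ℕ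
  hroot : N 1 = {root}
  hne : ∀ t, 1 ≤ t → t ≤ T → (N t).Nonempty
  hpa : ∀ t, 2 ≤ t → t ≤ T → ∀ n ∈ N t, pa t n ∈ N (t - 1)
  hprob_nonneg : ∀ t, 1 ≤ t → t ≤ T → ∀ n ∈ N t, 0 ≤ prob t n
  hprob_root : prob 1 root = 1
  hprob_sum : ∀ t, 2 ≤ t → t ≤ T → ∀ m ∈ N (t - 1),
    prob (t - 1) m = ∑ n ∈ (N t).filter (fun n => pa t n = m), prob t n

/-- Data of the multi-stage stochastic waste collection model `M`:
`N`b bins (`I' = {1,…,Nb}`, depot `0`, `I = {0,…,Nb}`), a scenario tree over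
stages `1,…,T`, accumulation rates `a i t n ∈ [0,1]`, nonnegative reals
`C, R, Q, B, Mbig`, distances `d`, bin capacities `E` and initial fill
fractions `S`. -/
structure ModelM where
  T : ℕ
  hT : 2 ≤ T
  tree : ScenarioTree T
  Nb : ℕ
  hNb : 1 ≤ Nb
  a : ℕ → ℕ → ℕ → ℝ
  ha : ∀ i ∈ Finset.Icc 1 Nb, ∀ t, 2 ≤ t → t ≤ T → ∀ n ∈ tree.N t,
    0 ≤ a i t n ∧ a i t n ≤ 1
  C : ℝ
  R : ℝ
  Q : ℝ
  B : ℝ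
  Mbig : ℝ
  hC : 0 ≤ C
  hR : 0 ≤ R
  hQ : 0 ≤ Q
  hB : 0 ≤ B
  hMbig : 0 ≤ Mbig
  d : ℕ → ℕ → ℝ
  hd : ∀ i ∈ Finset.Icc 0 Nb, ∀ j ∈ Finset.Icc 0 Nb, i ≠ j → 0 ≤ d i j
  E : ℕ → ℝ
  S : ℕ → ℝ
  hE : ∀ i ∈ Finset.Icc 1 Nb, 0 ≤ E i
  hS : ∀ i ∈ Finset.Icc 1 Nb, 0 ≤ S i ∧ S i ≤ 1

namespace ModelM

/-- The vertex set `I = {0,1,…,N}` (depot and bins). -/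
def Iall (P : ModelM) : Finset ℕ := Finset.Icc 0 P.Nb

/-- The bin set `I' = {1,…,N}`. -/
def Ibins (P : ModelM) : Finset ℕ := Finset.Icc 1 P.Nb

end ModelM

/-- A (candidate) solution of model `M`: routing variables `x i j t`, visit
variables `y i t`, flows `f i j t n`, collected amounts `w i t n` and
inventories `u i t n` (node `n` at stage `t`). -/
structure Sol where
  x : ℕ → ℕ → ℕ → ℝ
  y : ℕ → ℕ → ℝ
  f : ℕ → ℕ → ℕ → ℕ → ℝ
  w : ℕ → ℕ → ℕ → ℝ
  u : ℕ → ℕ → ℕ → ℝ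

/-- Feasibility of a solution for the constraints of model `M` restricted to
the stage window `k,…,l`, with the stage-`k` inventories fixed to `v`:
the binariness of `x, y` for `k ≤ t ≤ l-1`, nonnegativity of `f, w, u`, and
constraints (C1)–(C10), (C12), (C13) for `k+1 ≤ t ≤ l` and (C6)–(C8) for
`k ≤ t ≤ l-1`; `(C11)` is replaced by `u i k n = v i n`.
The full model `M` is the case `k = 1`, `l = T`, `v i n = E i * B * S i`. -/
def FeasOn (P : ModelM) (k l : ℕ) (v : ℕ → ℕ → ℝ) (s : Sol) : Prop :=
  (∀ i ∈ P.Ibins, ∀ n ∈ P.tree.N k, s.u i k n = v i n) ∧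
  (∀ t, k ≤ t → t + 1 ≤ l → ∀ i ∈ P.Iall, ∀ j ∈ P.Iall, i ≠ j →
    (s.x i j t = 0 ∨ s.x i j t = 1)) ∧
  (∀ t, k ≤ t → t + 1 ≤ l → ∀ i ∈ P.Ibins, (s.y i t = 0 ∨ s.y i t = 1)) ∧
  (∀ t, k + 1 ≤ t → t ≤ l → ∀ n ∈ P.tree.N t, ∀ i ∈ P.Ibins, ∀ j ∈ P.Iall, i ≠ j →
    0 ≤ s.f i j t n) ∧
  (∀ t, k + 1 ≤ t → t ≤ l → ∀ n ∈ P.tree.N t, ∀ i ∈ P.Ibins, 0 ≤ s.w i t n) ∧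
  (∀ t, k ≤ t → t ≤ l → ∀ n ∈ P.tree.N t, ∀ i ∈ P.Ibins, 0 ≤ s.u i t n) ∧
  -- (C1)
  (∀ t, k + 1 ≤ t → t ≤ l → ∀ n ∈ P.tree.N t, ∀ i ∈ P.Ibins,
    (∑ j ∈ P.Iall.erase i, s.f i j t n) - (∑ j ∈ P.Ibins.erase i, s.f j i t n)
      = s.w i t n) ∧
  -- (C2)
  (∀ t, k + 1 ≤ t → t ≤ l → ∀ n ∈ P.tree.N t, ∀ i ∈ P.Ibins, ∀ j ∈ P.Ibins, i ≠ j →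
    s.f i j t n ≤ (P.Q - P.E j * P.B * P.a j t n) * s.x i j (t - 1)) ∧
  -- (C3)
  (∀ t, k + 1 ≤ t → t ≤ l → ∀ n ∈ P.tree.N t, ∀ i ∈ P.Ibins,
    s.f i 0 t n ≤ P.Q * s.x i 0 (t - 1)) ∧
  -- (C4)
  (∀ t, k + 1 ≤ t → t ≤ l → ∀ n ∈ P.tree.N t, ∀ i ∈ P.Ibins, ∀ j ∈ P.Ibins, i ≠ j →
    s.f i j t n ≤ P.Q - s.w j t n) ∧
  -- (C5)
  (∀ t, k + 1 ≤ t → t ≤ l → ∀ n ∈ P.tree.N t, ∀ i ∈ P.Ibins, ∀ j ∈ P.Iall, i ≠ j →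
    s.w i t n - P.Mbig * (1 - s.x i j (t - 1)) ≤ s.f i j t n) ∧
  -- (C6)
  (∀ t, k ≤ t → t + 1 ≤ l → ∀ i ∈ P.Ibins,
    ∑ j ∈ P.Iall.erase i, s.x i j t = s.y i t) ∧
  -- (C7)
  (∀ t, k ≤ t → t + 1 ≤ l → ∀ j ∈ P.Ibins,
    ∑ i ∈ P.Iall.erase j, s.x i j t = s.y j t) ∧
  -- (C8)
  (∀ t, k ≤ t → t + 1 ≤ l →
    ∑ i ∈ P.Ibins, s.x i 0 t = ∑ j ∈ P.Ibins, s.x 0 j t) ∧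
  -- (C9)
  (∀ t, k + 1 ≤ t → t ≤ l → ∀ n ∈ P.tree.N t, ∀ i ∈ P.Ibins,
    s.w i t n ≤ P.E i * P.B * s.y i (t - 1)) ∧
  -- (C10)
  (∀ t, k + 1 ≤ t → t ≤ l → ∀ n ∈ P.tree.N t, ∀ i ∈ P.Ibins,
    s.u i t n ≤ P.Mbig * (1 - s.y i (t - 1))) ∧
  -- (C12)
  (∀ t, k + 1 ≤ t → t ≤ l → ∀ n ∈ P.tree.N t, ∀ i ∈ P.Ibins,
    s.u i t n = s.u i (t - 1) (P.tree.pa t n) + P.E i * P.B * P.a i t n - s.w i t n) ∧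
  -- (C13)
  (∀ t, k + 1 ≤ t → t ≤ l → ∀ n ∈ P.tree.N t, ∀ i ∈ P.Ibins,
    s.u i (t - 1) (P.tree.pa t n) ≤ (1 - P.a i t n) * (P.E i * P.B))

/-- Objective of the subproblem on the stage window `k,…,l`:
expected revenue over stages `k+1,…,l` minus travel costs over stages
`k,…,l-1`.  The profit of model `M` is the case `k = 1`, `l = T`. -/
def subObj (P : ModelM) (k l : ℕ) (s : Sol) : ℝ :=
  P.R * ∑ t ∈ Finset.Icc (k + 1) l, ∑ n ∈ P.tree.N t,
      P.tree.prob t n * ∑ i ∈ P.Ibins, s.w i t n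
  - P.C * ∑ t ∈ Finset.Icc k (l - 1), ∑ i ∈ P.Iall,
      ∑ j ∈ P.Iall.erase i, P.d i j * s.x i j t

/-- Feasibility for the full model `M` (stages `1,…,T`, `u i root = E i B S i`). -/
def Feasible (P : ModelM) (s : Sol) : Prop :=
  FeasOn P 1 P.T (fun i _ => P.E i * P.B * P.S i) s

/-- The profit `z` of a solution of model `M`. -/
def profit (P : ModelM) (s : Sol) : ℝ := subObj P 1 P.T s

/-- Feasibility for model `M(v)`: the two-stage case of model `M` in which
(C11) is replaced by `u i root = v i`. -/
def MvFeasible (P : ModelM) (v : ℕ → ℝ) (s : Sol) : Prop :=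
  FeasOn P 1 2 (fun i _ => v i) s

/-- `s` is an optimal solution of the subproblem on stages `k,…,l` with
stage-`k` inventories `v`. -/
def SubOptimal (P : ModelM) (k l : ℕ) (v : ℕ → ℕ → ℝ) (s : Sol) : Prop :=
  FeasOn P k l v s ∧ ∀ s', FeasOn P k l v s' → subObj P k l s' ≤ subObj P k l s

/-- The fixed stage-`k` inventories used at iteration `k` of the rolling
horizon approach: `E i B S i` for `k = 1`, and the values stored at iteration
`k - 1` (the inventories of `s (k-1)` at the stage-`k` nodes) for `k ≥ 2`. -/
def rhInv (P : ModelM) (s : ℕ → Sol) (k : ℕ) : ℕ → ℕ → ℝ :=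
  if k ≤ 1 then fun i _ => P.E i * P.B * P.S i else fun i n => (s (k - 1)).u i k n

/-- Last stage `k + min(W, T - k)` of the subproblem at iteration `k` of the
rolling horizon approach with window `W`. -/
def rhWindowEnd (P : ModelM) (W k : ℕ) : ℕ := k + min W (P.T - k)

/-- An execution of the rolling horizon approach with window `W`: for every
iteration `k = 1,…,T-1`, `s k` is an optimal solution of the subproblem on
stages `k,…,k + min(W, T-k)` with the stage-`k` inventories induced by the
previously stored solutions. -/
def IsExecution (P : ModelM) (W : ℕ) (s : ℕ → Sol) : Prop :=
  ∀ k, 1 ≤ k → k ≤ P.T - 1 →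
    SubOptimal P k (rhWindowEnd P W k) (rhInv P s k) (s k)

/-- The rolling horizon value `z^{RH,W}`: the profit of model `M` evaluated at
the stored variables (`x`, `y` of stage `t` stored at iteration `t`; `w` at the
stage-`t` nodes stored at iteration `t-1`). -/
def zRH (P : ModelM) (s : ℕ → Sol) : ℝ :=
  P.R * ∑ t ∈ Finset.Icc 2 P.T, ∑ n ∈ P.tree.N t,
      P.tree.prob t n * ∑ i ∈ P.Ibins, (s (t - 1)).w i t n
  - P.C * ∑ t ∈ Finset.Icc 1 (P.T - 1), ∑ i ∈ P.Iall,
      ∑ j ∈ P.Iall.erase i, P.d i j * (s t).x i j t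

/-- In model `M` with `C = 0` (and `R ≥ 0`, part of the model data), every
feasible solution satisfies
`z ≤ R B Σ_{i∈I'} E_i (S_i + Σ_{t=2}^T E[a_i^(t)])`. -/
theorem profit_upper_bound_of_C_eq_zero (P : ModelM) (hC0 : P.C = 0)
    (s : Sol) (hs : Feasible P s) :
    profit P s ≤ P.R * P.B * ∑ i ∈ P.Ibins,
      P.E i * (P.S i + ∑ t ∈ Finset.Icc 2 P.T, ∑ n ∈ P.tree.N t,
        P.tree.prob t n * P.a i t n) := by
  obtain ⟨hu1, -, -, -, -, hupos, -, -, -, -, -, -, -, -, -, -, hC12, -⟩ := hs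
  have hT := P.hT
  -- parent-sum lemma
  have hpar : ∀ t, 2 ≤ t → t ≤ P.T → ∀ g : ℕ → ℝ,
      ∑ n ∈ P.tree.N t, P.tree.prob t n * g (P.tree.pa t n)
      = ∑ m ∈ P.tree.N (t - 1), P.tree.prob (t - 1) m * g m := by
    intro t h2 hTt g
    rw [← Finset.sum_fiberwise_of_maps_to (P.tree.hpa t h2 hTt)
      (fun n => P.tree.prob t n * g (P.tree.pa t n))]
    refine Finset.sum_congr rfl fun m hm => ?_
    rw [P.tree.hprob_sum t h2 hTt m hm, Finset.sum_mul]
    refine Finset.sum_congr rfl fun n hn => ?_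
    rw [(Finset.mem_filter.mp hn).2]
  have key : ∀ i ∈ P.Ibins,
      ∑ t ∈ Finset.Icc 2 P.T, ∑ n ∈ P.tree.N t, P.tree.prob t n * s.w i t n
      ≤ P.E i * P.B * (P.S i + ∑ t ∈ Finset.Icc 2 P.T, ∑ n ∈ P.tree.N t,
          P.tree.prob t n * P.a i t n) := by
    intro i hi
    set U : ℕ → ℝ := fun t => ∑ n ∈ P.tree.N t, P.tree.prob t n * s.u i t n with hU
    have hstep : ∀ t ∈ Finset.Icc 2 P.T,
        ∑ n ∈ P.tree.N t, P.tree.prob t n * s.w i t n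
        = (U (t - 1) - U t)
          + P.E i * P.B * ∑ n ∈ P.tree.N t, P.tree.prob t n * P.a i t n := by
      intro t ht
      obtain ⟨h2, hTt⟩ := Finset.mem_Icc.mp ht
      have hw : ∀ n ∈ P.tree.N t,
          P.tree.prob t n * s.w i t n
          = P.tree.prob t n * s.u i (t - 1) (P.tree.pa t n)
            - P.tree.prob t n * s.u i t n
            + P.E i * P.B * (P.tree.prob t n * P.a i t n) := by
        intro n hn
        have := hC12 t (by omega) hTt n hn i hi
        rw [this]; ring
      rw [Finset.sum_congr rfl hw, Finset.sum_add_distrib, Finset.sum_sub_distrib,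
        ← Finset.mul_sum, hpar t h2 hTt]
    rw [Finset.sum_congr rfl hstep, Finset.sum_add_distrib, ← Finset.mul_sum]
    have htel : ∀ m, 2 ≤ m → ∑ t ∈ Finset.Icc 2 m, (U (t - 1) - U t) = U 1 - U m := by
      intro m hm
      induction m with
      | zero => omega
      | succ k ih =>
        rcases Nat.lt_or_ge k 2 with hk | hk
        · interval_cases k
          · omega
          · simp [Finset.Icc_self]
        · rw [Finset.sum_Icc_succ_top (by omega), ih hk]
          simp only [Nat.add_sub_cancel]
          ring
    have hU1 : U 1 = P.E i * P.B * P.S i := by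
      simp only [hU, P.tree.hroot, Finset.sum_singleton, P.tree.hprob_root, one_mul]
      exact hu1 i hi P.tree.root (by rw [P.tree.hroot]; exact Finset.mem_singleton_self _)
    have hUT : 0 ≤ U P.T := by
      refine Finset.sum_nonneg fun n hn => mul_nonneg ?_ ?_
      · exact P.tree.hprob_nonneg P.T (by omega) le_rfl n hn
      · exact hupos P.T (by omega) le_rfl n hn i hi
    rw [htel P.T hT, hU1]
    nlinarith [hUT]
  have hswap : ∑ t ∈ Finset.Icc 2 P.T, ∑ n ∈ P.tree.N t,
        P.tree.prob t n * ∑ i ∈ P.Ibins, s.w i t n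
      = ∑ i ∈ P.Ibins, ∑ t ∈ Finset.Icc 2 P.T, ∑ n ∈ P.tree.N t,
        P.tree.prob t n * s.w i t n := by
    rw [Finset.sum_comm]
    refine Finset.sum_congr rfl fun t _ => ?_
    rw [Finset.sum_comm]
    refine Finset.sum_congr rfl fun n _ => ?_
    rw [Finset.mul_sum]
  have hRB : P.R * P.B * ∑ i ∈ P.Ibins, P.E i * (P.S i + ∑ t ∈ Finset.Icc 2 P.T,
        ∑ n ∈ P.tree.N t, P.tree.prob t n * P.a i t n)
      = P.R * ∑ i ∈ P.Ibins, P.E i * P.B * (P.S i + ∑ t ∈ Finset.Icc 2 P.T,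
        ∑ n ∈ P.tree.N t, P.tree.prob t n * P.a i t n) := by
    rw [Finset.mul_sum, Finset.mul_sum]
    refine Finset.sum_congr rfl fun i _ => ?_
    ring
  have hsum := Finset.sum_le_sum key
  unfold profit subObj
  rw [hC0, zero_mul, sub_zero, hswap, hRB]
  exact mul_le_mul_of_nonneg_left hsum P.hR
end

section
/- In model M, assume Q ≥ B Σ_{i∈I'} E_i, M ≥ Q, and S_i + a_i^n ≤ 1 for every i ∈ I' and every n ∈ N^2. Then model M admits a feasible solution whose inventories vanish after the first stage, i.e. u_i^n = 0 for all i ∈ I' and all n ∈ N^t with 2 ≤ t ≤ T, and whose revenue satisfies R Σ_{t=2}^{T} Σ_{n∈N^t} π^n Σ_{i∈I'} w_i^n = R B Σ_{i∈I'} E_i ( S_i + Σ_{t=2}^{T} E[a_i^(t)] ). -/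
section FCaux

lemma prob_sum_one {T : ℕ} (tr : ScenarioTree T) :
    ∀ t, 1 ≤ t → t ≤ T → ∑ n ∈ tr.N t, tr.prob t n = 1 := by
  intro t
  induction t with
  | zero => intro h; omega
  | succ t ih =>
    intro h1 hT
    rcases Nat.lt_or_ge t 1 with h | h
    · have ht0 : t = 0 := by omega
      subst ht0
      rw [tr.hroot, Finset.sum_singleton, tr.hprob_root]
    · have hsum := tr.hprob_sum (t + 1) (by omega) hT
      simp only [Nat.add_sub_cancel] at hsum
      have hmaps : ∀ n ∈ tr.N (t + 1), tr.pa (t + 1) n ∈ tr.N t := by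
        intro n hn
        simpa using tr.hpa (t + 1) (by omega) hT n hn
      rw [← Finset.sum_fiberwise_of_maps_to hmaps (tr.prob (t + 1))]
      rw [← ih h (by omega)]
      exact Finset.sum_congr rfl fun m hm => (hsum m hm).symm

namespace FC

def arc (P : ModelM) (i j : ℕ) : Prop :=
  (i < P.Nb ∧ j = i + 1) ∨ (i = P.Nb ∧ j = 0)

instance (P : ModelM) (i j : ℕ) : Decidable (arc P i j) := by
  unfold arc; infer_instance

noncomputable def wS (P : ModelM) (i t n : ℕ) : ℝ :=
  (if t = 2 then P.E i * P.B * P.S i else 0) + P.E i * P.B * P.a i t n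

noncomputable def uS (P : ModelM) (i t : ℕ) : ℝ :=
  if t ≤ 1 then P.E i * P.B * P.S i else 0

noncomputable def xS (P : ModelM) (i j : ℕ) : ℝ := if arc P i j then 1 else 0

noncomputable def fS (P : ModelM) (i j t n : ℕ) : ℝ :=
  if arc P i j then ∑ k ∈ Finset.Icc 1 i, wS P k t n else 0

variable {P : ModelM}

lemma wS_bounds
    (hSa : ∀ i ∈ P.Ibins, ∀ n ∈ P.tree.N 2, P.S i + P.a i 2 n ≤ 1)
    {i t n : ℕ} (hi : i ∈ P.Ibins) (h2 : 2 ≤ t) (hT : t ≤ P.T)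
    (hn : n ∈ P.tree.N t) :
    0 ≤ wS P i t n ∧ wS P i t n ≤ P.E i * P.B := by
  have hE := P.hE i hi
  have hS := P.hS i hi
  have ha := P.ha i hi t h2 hT n hn
  have hEB : 0 ≤ P.E i * P.B := mul_nonneg hE P.hB
  unfold wS
  by_cases ht : t = 2
  · subst ht
    have := hSa i hi n hn
    rw [if_pos rfl]
    constructor
    · nlinarith [hS.1, ha.1]
    · nlinarith
  · simp only [if_neg ht, zero_add]
    constructor
    · nlinarith [ha.1]
    · nlinarith [ha.2]

lemma psum_le_Q
    (hQ : P.B * ∑ i ∈ P.Ibins, P.E i ≤ P.Q)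
    (hSa : ∀ i ∈ P.Ibins, ∀ n ∈ P.tree.N 2, P.S i + P.a i 2 n ≤ 1)
    {m t n : ℕ} (hm : m ≤ P.Nb) (h2 : 2 ≤ t) (hT : t ≤ P.T)
    (hn : n ∈ P.tree.N t) :
    ∑ k ∈ Finset.Icc 1 m, wS P k t n ≤ P.B * ∑ k ∈ Finset.Icc 1 m, P.E k := by
  rw [Finset.mul_sum]
  apply Finset.sum_le_sum
  intro k hk
  rw [Finset.mem_Icc] at hk
  have hkI : k ∈ P.Ibins := by
    simp only [ModelM.Ibins, Finset.mem_Icc]; omega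
  have := (wS_bounds hSa hkI h2 hT hn).2
  linarith [this, mul_comm (P.E k) P.B ▸ this]

lemma Esum_le {m : ℕ} (hm : m ≤ P.Nb) :
    ∑ k ∈ Finset.Icc 1 m, P.E k ≤ ∑ k ∈ P.Ibins, P.E k := by
  apply Finset.sum_le_sum_of_subset_of_nonneg
  · intro k hk
    rw [Finset.mem_Icc] at hk
    simp only [ModelM.Ibins, Finset.mem_Icc]; omega
  · intro k hk _; exact P.hE k hk

lemma psum_le_Q' (hQ : P.B * ∑ i ∈ P.Ibins, P.E i ≤ P.Q)
    (hSa : ∀ i ∈ P.Ibins, ∀ n ∈ P.tree.N 2, P.S i + P.a i 2 n ≤ 1)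
    {m t n : ℕ} (hm : m ≤ P.Nb) (h2 : 2 ≤ t) (hT : t ≤ P.T)
    (hn : n ∈ P.tree.N t) :
    ∑ k ∈ Finset.Icc 1 m, wS P k t n ≤ P.Q := by
  have h1 := psum_le_Q hQ hSa hm h2 hT hn
  have h2' := Esum_le (P := P) hm
  have : P.B * ∑ k ∈ Finset.Icc 1 m, P.E k ≤ P.B * ∑ k ∈ P.Ibins, P.E k :=
    mul_le_mul_of_nonneg_left h2' P.hB
  linarith

lemma wS_ge (hSa : ∀ i ∈ P.Ibins, ∀ n ∈ P.tree.N 2, P.S i + P.a i 2 n ≤ 1)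
    {i t n : ℕ} (hi : i ∈ P.Ibins) (h2 : 2 ≤ t) (hT : t ≤ P.T)
    (hn : n ∈ P.tree.N t) :
    P.E i * P.B * P.a i t n ≤ wS P i t n := by
  have hEB : (0:ℝ) ≤ P.E i * P.B * P.S i :=
    mul_nonneg (mul_nonneg (P.hE i hi) P.hB) (P.hS i hi).1
  unfold wS; split
  · linarith
  · simp

lemma wS_le_Q (hQ : P.B * ∑ i ∈ P.Ibins, P.E i ≤ P.Q)
    (hSa : ∀ i ∈ P.Ibins, ∀ n ∈ P.tree.N 2, P.S i + P.a i 2 n ≤ 1)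
    {j t n : ℕ} (hj : j ∈ P.Ibins) (h2 : 2 ≤ t) (hT : t ≤ P.T)
    (hn : n ∈ P.tree.N t) :
    wS P j t n ≤ P.Q := by
  have hb := (wS_bounds hSa hj h2 hT hn).2
  have hs : P.E j ≤ ∑ k ∈ P.Ibins, P.E k :=
    Finset.single_le_sum (fun k hk => P.hE k hk) hj
  nlinarith [P.hB]

lemma sum_out {i : ℕ} (hi : i ∈ P.Ibins) (g : ℕ → ℝ) :
    ∑ j ∈ P.Iall.erase i, (if arc P i j then g i else 0) = g i := by
  simp only [ModelM.Ibins, Finset.mem_Icc] at hi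
  by_cases hN : i = P.Nb
  · rw [Finset.sum_eq_single_of_mem 0]
    · exact if_pos (Or.inr ⟨hN, rfl⟩ : arc P i 0)
    · simp only [ModelM.Iall, Finset.mem_erase, Finset.mem_Icc]; omega
    · intro c hc hne
      rw [if_neg]
      rintro (⟨h1, h2⟩ | ⟨h1, h2⟩) <;> omega
  · rw [Finset.sum_eq_single_of_mem (i + 1)]
    · exact if_pos (Or.inl ⟨by omega, rfl⟩ : arc P i (i+1))
    · simp only [ModelM.Iall, Finset.mem_erase, Finset.mem_Icc]; omega
    · intro c hc hne
      rw [if_neg]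
      rintro (⟨h1, h2⟩ | ⟨h1, h2⟩) <;> omega

lemma sum_in {j : ℕ} (hj : j ∈ P.Ibins) (g : ℕ → ℝ) :
    ∑ i ∈ P.Iall.erase j, (if arc P i j then g i else 0) = g (j - 1) := by
  simp only [ModelM.Ibins, Finset.mem_Icc] at hj
  rw [Finset.sum_eq_single_of_mem (j - 1)]
  · exact if_pos (Or.inl ⟨by omega, by omega⟩ : arc P (j-1) j)
  · simp only [ModelM.Iall, Finset.mem_erase, Finset.mem_Icc]; omega
  · intro c hc hne
    simp only [ModelM.Iall, Finset.mem_erase, Finset.mem_Icc] at hc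
    rw [if_neg]
    rintro (⟨h1, h2⟩ | ⟨h1, h2⟩) <;> omega

end FC
end FCaux

/-- If `Q ≥ B Σ_{i∈I'} E_i`, `M ≥ Q` and `S_i + a_i^n ≤ 1` for every `i ∈ I'`
and `n ∈ N²`, then model `M` has a feasible solution with vanishing
inventories after the first stage, whose revenue equals
`R B Σ_{i∈I'} E_i (S_i + Σ_{t=2}^T E[a_i^(t)])`. -/
theorem exists_feasible_full_collection (P : ModelM)
    (hQ : P.B * ∑ i ∈ P.Ibins, P.E i ≤ P.Q) (hM : P.Q ≤ P.Mbig)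
    (hSa : ∀ i ∈ P.Ibins, ∀ n ∈ P.tree.N 2, P.S i + P.a i 2 n ≤ 1) :
    ∃ s : Sol, Feasible P s ∧
      (∀ i ∈ P.Ibins, ∀ t, 2 ≤ t → t ≤ P.T → ∀ n ∈ P.tree.N t, s.u i t n = 0) ∧
      P.R * ∑ t ∈ Finset.Icc 2 P.T, ∑ n ∈ P.tree.N t,
          P.tree.prob t n * ∑ i ∈ P.Ibins, s.w i t n
        = P.R * P.B * ∑ i ∈ P.Ibins,
            P.E i * (P.S i + ∑ t ∈ Finset.Icc 2 P.T, ∑ n ∈ P.tree.N t,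
              P.tree.prob t n * P.a i t n) := by
  classical
  refine ⟨⟨fun i j _ => FC.xS P i j, fun _ _ => 1, fun i j t n => FC.fS P i j t n,
      fun i t n => FC.wS P i t n, fun i t _ => FC.uS P i t⟩, ?_, ?_, ?_⟩
  · unfold Feasible FeasOn
    dsimp only
    refine ⟨?_, ?_, ?_, ?_, ?_, ?_, ?_, ?_, ?_, ?_, ?_, ?_, ?_, ?_, ?_, ?_, ?_, ?_⟩
    · -- initial inventories
      intro i hi n hn
      simp [FC.uS]
    · -- x binary
      intro t _ _ i _ j _ _
      unfold FC.xS; split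
      · exact Or.inr rfl
      · exact Or.inl rfl
    · -- y binary
      intro t _ _ i _; exact Or.inr rfl
    · -- f nonneg
      intro t h1 h2 n hn i hi j hj hij
      unfold FC.fS; split
      · apply Finset.sum_nonneg
        intro k hk
        rw [Finset.mem_Icc] at hk
        simp only [ModelM.Ibins, Finset.mem_Icc] at hi
        have hk' : k ∈ P.Ibins := by simp only [ModelM.Ibins, Finset.mem_Icc]; omega
        exact (FC.wS_bounds hSa hk' (by omega) h2 hn).1
      · exact le_refl 0
    · -- w nonneg
      intro t h1 h2 n hn i hi
      exact (FC.wS_bounds hSa hi (by omega) h2 hn).1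
    · -- u nonneg
      intro t _ _ n hn i hi
      unfold FC.uS; split
      · exact mul_nonneg (mul_nonneg (P.hE i hi) P.hB) (P.hS i hi).1
      · exact le_refl 0
    · -- C1
      intro t h1 h2 n hn i hi
      have hi' : 1 ≤ i ∧ i ≤ P.Nb := by
        simpa only [ModelM.Ibins, Finset.mem_Icc] using hi
      have hout : ∑ j ∈ P.Iall.erase i, FC.fS P i j t n
          = ∑ k ∈ Finset.Icc 1 i, FC.wS P k t n :=
        FC.sum_out hi (fun m => ∑ k ∈ Finset.Icc 1 m, FC.wS P k t n)
      have h0 : FC.fS P 0 i t n = 0 := by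
        unfold FC.fS; split <;> simp
      have hIall : P.Iall.erase i = insert 0 (P.Ibins.erase i) := by
        ext j
        simp only [ModelM.Iall, ModelM.Ibins, Finset.mem_erase, Finset.mem_insert,
          Finset.mem_Icc]
        omega
      have h0notin : (0 : ℕ) ∉ P.Ibins.erase i := by
        simp [ModelM.Ibins, Finset.mem_erase, Finset.mem_Icc]
      have hin : ∑ j ∈ P.Ibins.erase i, FC.fS P j i t n
          = ∑ k ∈ Finset.Icc 1 (i - 1), FC.wS P k t n := by
        have h := FC.sum_in hi (fun m => ∑ k ∈ Finset.Icc 1 m, FC.wS P k t n)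
        rw [hIall, Finset.sum_insert h0notin] at h
        have hz : (if FC.arc P 0 i then ∑ k ∈ Finset.Icc 1 0, FC.wS P k t n else 0)
            = 0 := by
          rw [Finset.Icc_eq_empty (by omega)]
          split <;> simp
        rw [hz, zero_add] at h
        simpa only [FC.fS] using h
      have hstep := Finset.sum_Icc_succ_top (by omega : 1 ≤ i - 1 + 1)
        (fun k => FC.wS P k t n)
      rw [show i - 1 + 1 = i by omega] at hstep
      rw [hout, hin, hstep]
      ring
    · -- C2
      intro t h1 h2 n hn i hi j hj hij
      have hi' : 1 ≤ i ∧ i ≤ P.Nb := by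
        simpa only [ModelM.Ibins, Finset.mem_Icc] using hi
      have hj' : 1 ≤ j ∧ j ≤ P.Nb := by
        simpa only [ModelM.Ibins, Finset.mem_Icc] using hj
      by_cases h : FC.arc P i j
      · rcases h with ⟨hlt, hj1⟩ | ⟨_, hj0⟩
        · subst hj1
          rw [show FC.fS P i (i + 1) t n = ∑ k ∈ Finset.Icc 1 i, FC.wS P k t n from
              if_pos (Or.inl ⟨hlt, rfl⟩),
            show FC.xS P i (i + 1) = 1 from if_pos (Or.inl ⟨hlt, rfl⟩), mul_one]
          have hstep := Finset.sum_Icc_succ_top (by omega : 1 ≤ i + 1)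
            (fun k => FC.wS P k t n)
          have hq := FC.psum_le_Q' hQ hSa (m := i + 1) (by omega) (by omega) h2 hn
          have hge := FC.wS_ge hSa hj (by omega) h2 hn
          rw [hstep] at hq
          linarith
        · omega
      · rw [show FC.fS P i j t n = 0 from if_neg h,
          show FC.xS P i j = 0 from if_neg h, mul_zero]
    · -- C3
      intro t h1 h2 n hn i hi
      have hi' : 1 ≤ i ∧ i ≤ P.Nb := by
        simpa only [ModelM.Ibins, Finset.mem_Icc] using hi
      by_cases hN : i = P.Nb
      · subst hN
        rw [show FC.fS P P.Nb 0 t n = ∑ k ∈ Finset.Icc 1 P.Nb, FC.wS P k t n from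
            if_pos (Or.inr ⟨rfl, rfl⟩),
          show FC.xS P P.Nb 0 = 1 from if_pos (Or.inr ⟨rfl, rfl⟩), mul_one]
        exact FC.psum_le_Q' hQ hSa le_rfl (by omega) h2 hn
      · have hna : ¬ FC.arc P i 0 := by
          rintro (⟨_, h⟩ | ⟨h, _⟩) <;> omega
        rw [show FC.fS P i 0 t n = 0 from if_neg hna,
          show FC.xS P i 0 = 0 from if_neg hna, mul_zero]
    · -- C4
      intro t h1 h2 n hn i hi j hj hij
      have hi' : 1 ≤ i ∧ i ≤ P.Nb := by
        simpa only [ModelM.Ibins, Finset.mem_Icc] using hi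
      have hj' : 1 ≤ j ∧ j ≤ P.Nb := by
        simpa only [ModelM.Ibins, Finset.mem_Icc] using hj
      by_cases h : FC.arc P i j
      · rcases h with ⟨hlt, hj1⟩ | ⟨_, hj0⟩
        · subst hj1
          rw [show FC.fS P i (i + 1) t n = ∑ k ∈ Finset.Icc 1 i, FC.wS P k t n from
              if_pos (Or.inl ⟨hlt, rfl⟩)]
          have hstep := Finset.sum_Icc_succ_top (by omega : 1 ≤ i + 1)
            (fun k => FC.wS P k t n)
          have hq := FC.psum_le_Q' hQ hSa (m := i + 1) (by omega) (by omega) h2 hn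
          rw [hstep] at hq
          linarith
        · omega
      · rw [show FC.fS P i j t n = 0 from if_neg h]
        have := FC.wS_le_Q hQ hSa hj (by omega) h2 hn
        linarith
    · -- C5
      intro t h1 h2 n hn i hi j hj hij
      have hi' : 1 ≤ i ∧ i ≤ P.Nb := by
        simpa only [ModelM.Ibins, Finset.mem_Icc] using hi
      by_cases h : FC.arc P i j
      · rw [show FC.fS P i j t n = ∑ k ∈ Finset.Icc 1 i, FC.wS P k t n from if_pos h,
          show FC.xS P i j = 1 from if_pos h]
        have hmem : i ∈ Finset.Icc 1 i := by rw [Finset.mem_Icc]; omega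
        have hle : FC.wS P i t n ≤ ∑ k ∈ Finset.Icc 1 i, FC.wS P k t n := by
          apply Finset.single_le_sum (fun k hk => ?_) hmem
          rw [Finset.mem_Icc] at hk
          have hk' : k ∈ P.Ibins := by simp only [ModelM.Ibins, Finset.mem_Icc]; omega
          exact (FC.wS_bounds hSa hk' (by omega) h2 hn).1
        nlinarith [P.hMbig]
      · rw [show FC.fS P i j t n = 0 from if_neg h,
          show FC.xS P i j = 0 from if_neg h]
        have := FC.wS_le_Q hQ hSa hi (by omega) h2 hn
        nlinarith
    · -- C6
      intro t _ _ i hi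
      exact FC.sum_out hi (fun _ => (1 : ℝ))
    · -- C7
      intro t _ _ j hj
      exact FC.sum_in hj (fun _ => (1 : ℝ))
    · -- C8
      have hNb := P.hNb
      have hL : ∑ i ∈ P.Ibins, FC.xS P i 0 = 1 := by
        rw [Finset.sum_eq_single_of_mem P.Nb
          (by simp only [ModelM.Ibins, Finset.mem_Icc]; omega)]
        · exact if_pos (Or.inr ⟨rfl, rfl⟩)
        · intro c hc hne
          simp only [ModelM.Ibins, Finset.mem_Icc] at hc
          exact if_neg (by rintro (⟨_, h⟩ | ⟨h, _⟩) <;> omega)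
      have hR : ∑ j ∈ P.Ibins, FC.xS P 0 j = 1 := by
        rw [Finset.sum_eq_single_of_mem 1
          (by simp only [ModelM.Ibins, Finset.mem_Icc]; omega)]
        · exact if_pos (Or.inl ⟨by omega, rfl⟩)
        · intro c hc hne
          simp only [ModelM.Ibins, Finset.mem_Icc] at hc
          exact if_neg (by rintro (⟨_, h⟩ | ⟨h, _⟩) <;> omega)
      intro t _ _
      rw [hL, hR]
    · -- C9
      intro t h1 h2 n hn i hi
      rw [mul_one]
      exact (FC.wS_bounds hSa hi (by omega) h2 hn).2
    · -- C10
      intro t h1 h2 n hn i hi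
      simp [FC.uS, show ¬ t ≤ 1 by omega]
    · -- C12
      intro t h1 h2 n hn i hi
      rw [show FC.uS P i t = 0 from if_neg (by omega)]
      by_cases ht : t = 2
      · subst ht
        rw [show FC.uS P i (2 - 1) = P.E i * P.B * P.S i from if_pos (by norm_num),
          show FC.wS P i 2 n = P.E i * P.B * P.S i + P.E i * P.B * P.a i 2 n from
            by rw [FC.wS, if_pos rfl]]
        ring
      · rw [show FC.uS P i (t - 1) = 0 from if_neg (by omega),
          show FC.wS P i t n = 0 + P.E i * P.B * P.a i t n from
            by rw [FC.wS, if_neg ht]]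
        ring
    · -- C13
      intro t h1 h2 n hn i hi
      have ha := P.ha i hi t (by omega) h2 n hn
      have hEB : (0 : ℝ) ≤ P.E i * P.B := mul_nonneg (P.hE i hi) P.hB
      by_cases ht : t = 2
      · subst ht
        rw [show FC.uS P i (2 - 1) = P.E i * P.B * P.S i from if_pos (by norm_num)]
        have hs := hSa i hi n hn
        nlinarith
      · rw [show FC.uS P i (t - 1) = 0 from if_neg (by omega)]
        nlinarith
  · -- inventories vanish
    intro i hi t h2 hT n hn
    simp [FC.uS, show ¬ t ≤ 1 by omega]
  · -- revenue identity
    dsimp only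
    have hT2 := P.hT
    have key : ∀ t ∈ Finset.Icc 2 P.T,
        ∑ n ∈ P.tree.N t, P.tree.prob t n * ∑ i ∈ P.Ibins, FC.wS P i t n
        = ∑ i ∈ P.Ibins, ((if t = 2 then P.E i * P.B * P.S i else 0)
            + P.E i * P.B * ∑ n ∈ P.tree.N t, P.tree.prob t n * P.a i t n) := by
      intro t ht
      rw [Finset.mem_Icc] at ht
      have hp := prob_sum_one P.tree t (by omega) ht.2
      simp only [Finset.mul_sum]
      rw [Finset.sum_comm]
      refine Finset.sum_congr rfl fun i _ => ?_
      unfold FC.wS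
      have hexp : ∀ n, P.tree.prob t n
            * ((if t = 2 then P.E i * P.B * P.S i else 0) + P.E i * P.B * P.a i t n)
          = (if t = 2 then P.E i * P.B * P.S i else 0) * P.tree.prob t n
            + P.E i * P.B * (P.tree.prob t n * P.a i t n) := fun n => by ring
      simp only [hexp]
      rw [Finset.sum_add_distrib, ← Finset.mul_sum, ← Finset.mul_sum, hp, mul_one]
    rw [Finset.sum_congr rfl key, Finset.sum_comm]
    have hfinal : ∀ i ∈ P.Ibins,
        ∑ t ∈ Finset.Icc 2 P.T, ((if t = 2 then P.E i * P.B * P.S i else 0)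
            + P.E i * P.B * ∑ n ∈ P.tree.N t, P.tree.prob t n * P.a i t n)
        = P.E i * P.B * P.S i
          + P.E i * P.B * ∑ t ∈ Finset.Icc 2 P.T, ∑ n ∈ P.tree.N t,
              P.tree.prob t n * P.a i t n := by
      intro i _
      rw [Finset.sum_add_distrib, Finset.sum_ite_eq' (Finset.Icc 2 P.T) 2,
        if_pos (by rw [Finset.mem_Icc]; omega), Finset.mul_sum]
    rw [Finset.sum_congr rfl hfinal, mul_assoc]
    congr 1
    rw [Finset.mul_sum]
    exact Finset.sum_congr rfl fun i _ => by ring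
end

section
/- (Proposition 1.) In model M, assume C = 0, R ≥ 0, Q ≥ B Σ_{i∈I'} E_i, M ≥ Q, and S_i + a_i^n ≤ 1 for every i ∈ I' and every n ∈ N^2. Then the optimal profit is attained by some feasible solution and z* = R B Σ_{i∈I'} E_i ( S_i + Σ_{t=2}^{T} E[a_i^(t)] ). -/
/-! ### Auxiliary material for Proposition 1 -/

private lemma tele_aux (F : ℕ → ℝ) : ∀ T, 2 ≤ T →
    ∑ t ∈ Finset.Icc 2 T, (F (t - 1) - F t) = F 1 - F T := by
  intro T hT
  induction T with
  | zero => omega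
  | succ T ih =>
    rcases Nat.lt_or_ge T 2 with h | h
    · have hT1 : T = 1 := by omega
      subst hT1
      simp [Finset.Icc_self]
    · rw [Finset.sum_Icc_succ_top (by omega : 2 ≤ T + 1), ih h,
        show T + 1 - 1 = T from rfl]
      ring

/-- Pushing a function of the parent node through the probabilities. -/
private lemma pa_push (P : ModelM) (t : ℕ) (h2 : 2 ≤ t) (hT : t ≤ P.T) (g : ℕ → ℝ) :
    ∑ n ∈ P.tree.N t, P.tree.prob t n * g (P.tree.pa t n)
      = ∑ m ∈ P.tree.N (t - 1), P.tree.prob (t - 1) m * g m := by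
  rw [← Finset.sum_fiberwise_of_maps_to (P.tree.hpa t h2 hT)
      (fun n => P.tree.prob t n * g (P.tree.pa t n))]
  refine Finset.sum_congr rfl fun m hm => ?_
  rw [P.tree.hprob_sum t h2 hT m hm, Finset.sum_mul]
  exact Finset.sum_congr rfl fun n hn => by rw [(Finset.mem_filter.mp hn).2]

/-- The telescoping identity for the expected collected amounts of a feasible
solution of model `M`. -/
private lemma rev_telescope (P : ModelM) (v : ℕ → ℕ → ℝ) (s : Sol)
    (hs : FeasOn P 1 P.T v s) (i : ℕ) (hi : i ∈ P.Ibins) :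
    ∑ t ∈ Finset.Icc 2 P.T, ∑ n ∈ P.tree.N t, P.tree.prob t n * s.w i t n
      = (∑ n ∈ P.tree.N 1, P.tree.prob 1 n * s.u i 1 n)
        - (∑ n ∈ P.tree.N P.T, P.tree.prob P.T n * s.u i P.T n)
        + P.E i * P.B *
          ∑ t ∈ Finset.Icc 2 P.T, ∑ n ∈ P.tree.N t, P.tree.prob t n * P.a i t n := by
  obtain ⟨h0, hx, hy, hf, hw, hu, c1, c2, c3, c4, c5, c6, c7, c8, c9, c10, c12, c13⟩ := hs
  set U : ℕ → ℝ := fun r => ∑ n ∈ P.tree.N r, P.tree.prob r n * s.u i r n with hU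
  have hstage : ∀ t ∈ Finset.Icc 2 P.T,
      ∑ n ∈ P.tree.N t, P.tree.prob t n * s.w i t n
        = (U (t - 1) - U t)
          + P.E i * P.B * ∑ n ∈ P.tree.N t, P.tree.prob t n * P.a i t n := by
    intro t ht
    obtain ⟨ht2, htT⟩ := Finset.mem_Icc.mp ht
    have step : ∀ n ∈ P.tree.N t, P.tree.prob t n * s.w i t n
        = P.tree.prob t n * s.u i (t - 1) (P.tree.pa t n)
          - P.tree.prob t n * s.u i t n
          + P.E i * P.B * (P.tree.prob t n * P.a i t n) := by
      intro n hn
      have h12 := c12 t (by omega) htT n hn i hi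
      have : s.w i t n = s.u i (t - 1) (P.tree.pa t n) + P.E i * P.B * P.a i t n
          - s.u i t n := by linarith
      rw [this]; ring
    rw [Finset.sum_congr rfl step, Finset.sum_add_distrib, Finset.sum_sub_distrib,
      ← Finset.mul_sum, pa_push P t ht2 htT (fun m => s.u i (t - 1) m)]
  rw [Finset.sum_congr rfl hstage, Finset.sum_add_distrib, ← Finset.mul_sum,
    tele_aux U P.T P.hT]

/-- The collected amounts of the candidate optimal solution. -/
noncomputable def goodW (P : ModelM) (i t n : ℕ) : ℝ :=
  P.E i * P.B * P.a i t n + (if t = 2 then P.E i * P.B * P.S i else 0)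

/-- The candidate optimal solution: every bin is emptied at every stage, with
out-and-back depot trips. -/
noncomputable def goodSol (P : ModelM) : Sol where
  x := fun i j _ => if (1 ≤ i ∧ i ≤ P.Nb ∧ j = 0) ∨ (i = 0 ∧ 1 ≤ j ∧ j ≤ P.Nb) then 1 else 0
  y := fun _ _ => 1
  f := fun i j t n => if j = 0 then goodW P i t n else 0
  w := fun i t n => goodW P i t n
  u := fun i t _ => if t = 1 then P.E i * P.B * P.S i else 0

private lemma goodW_nonneg (P : ModelM) {i t n : ℕ} (hi : i ∈ P.Ibins)
    (h2 : 2 ≤ t) (hT : t ≤ P.T) (hn : n ∈ P.tree.N t) : 0 ≤ goodW P i t n := by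
  have ha := (P.ha i hi t h2 hT n hn).1
  have hE := P.hE i hi
  have hS := (P.hS i hi).1
  have hB := P.hB
  unfold goodW
  have h1 : 0 ≤ P.E i * P.B * P.a i t n := by positivity
  have h2' : 0 ≤ P.E i * P.B * P.S i := by positivity
  split <;> linarith

private lemma goodW_le (P : ModelM)
    (hSa : ∀ i ∈ P.Ibins, ∀ n ∈ P.tree.N 2, P.S i + P.a i 2 n ≤ 1)
    {i t n : ℕ} (hi : i ∈ P.Ibins)
    (h2 : 2 ≤ t) (hT : t ≤ P.T) (hn : n ∈ P.tree.N t) :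
    goodW P i t n ≤ P.E i * P.B := by
  have ha := (P.ha i hi t h2 hT n hn).2
  have hEB : 0 ≤ P.E i * P.B := mul_nonneg (P.hE i hi) P.hB
  unfold goodW
  by_cases h : t = 2
  · subst h
    have := hSa i hi n hn
    rw [if_pos rfl]
    nlinarith
  · rw [if_neg h]
    nlinarith

private lemma EB_le_Q (P : ModelM) (hQ : P.B * ∑ i ∈ P.Ibins, P.E i ≤ P.Q)
    {i : ℕ} (hi : i ∈ P.Ibins) : P.E i * P.B ≤ P.Q := by
  have h1 : P.E i ≤ ∑ j ∈ P.Ibins, P.E j :=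
    Finset.single_le_sum (fun j hj => P.hE j hj) hi
  calc P.E i * P.B = P.B * P.E i := mul_comm _ _
    _ ≤ P.B * ∑ j ∈ P.Ibins, P.E j := mul_le_mul_of_nonneg_left h1 P.hB
    _ ≤ P.Q := hQ

private lemma goodSol_feasible (P : ModelM)
    (hQ : P.B * ∑ i ∈ P.Ibins, P.E i ≤ P.Q) (hM : P.Q ≤ P.Mbig)
    (hSa : ∀ i ∈ P.Ibins, ∀ n ∈ P.tree.N 2, P.S i + P.a i 2 n ≤ 1) :
    Feasible P (goodSol P) := by
  have hzero : (0:ℕ) ∈ P.Iall := by simp [ModelM.Iall]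
  refine ⟨?_, ?_, ?_, ?_, ?_, ?_, ?_, ?_, ?_, ?_, ?_, ?_, ?_, ?_, ?_, ?_, ?_, ?_⟩
  · intro i hi n hn; simp [goodSol]
  · intro t h1 h2 i hi j hj hij
    by_cases h : (1 ≤ i ∧ i ≤ P.Nb ∧ j = 0) ∨ (i = 0 ∧ 1 ≤ j ∧ j ≤ P.Nb) <;>
      simp [goodSol, h]
  · intro t h1 h2 i hi; right; rfl
  · intro t h2 hT n hn i hi j hj hij
    obtain ⟨hi1, hi2⟩ := Finset.mem_Icc.mp hi
    simp only [goodSol]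
    split
    · exact goodW_nonneg P hi (by omega) hT hn
    · exact le_refl 0
  · intro t h2 hT n hn i hi
    exact goodW_nonneg P hi (by omega) hT hn
  · intro t h1 hT n hn i hi
    simp only [goodSol]
    split
    · exact mul_nonneg (mul_nonneg (P.hE i hi) P.hB) (P.hS i hi).1
    · exact le_refl 0
  · -- C1
    intro t h2 hT n hn i hi
    obtain ⟨hi1, hi2⟩ := Finset.mem_Icc.mp hi
    have key : ∀ j ∈ P.Iall.erase i,
        (goodSol P).f i j t n = if j = 0 then (fun _ => goodW P i t n) j else 0 := by
      intro j hj; rfl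
    have key2 : ∀ j ∈ P.Ibins.erase i, (goodSol P).f j i t n = 0 := by
      intro j hj
      have : i ≠ 0 := by omega
      simp [goodSol, this]
    rw [Finset.sum_congr rfl key, Finset.sum_ite_eq' (P.Iall.erase i) 0
        (fun _ => goodW P i t n), Finset.sum_congr rfl key2, Finset.sum_const_zero,
      if_pos (Finset.mem_erase.mpr ⟨by omega, hzero⟩)]
    simp [goodSol]
  · -- C2
    intro t h2 hT n hn i hi j hj hij
    obtain ⟨hi1, hi2⟩ := Finset.mem_Icc.mp hi
    obtain ⟨hj1, hj2⟩ := Finset.mem_Icc.mp hj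
    have hx : ¬((1 ≤ i ∧ i ≤ P.Nb ∧ j = 0) ∨ (i = 0 ∧ 1 ≤ j ∧ j ≤ P.Nb)) := by omega
    have hj0 : j ≠ 0 := by omega
    have e1 : (goodSol P).f i j t n = 0 := if_neg hj0
    have e2 : (goodSol P).x i j (t - 1) = 0 := if_neg hx
    rw [e1, e2, mul_zero]
  · -- C3
    intro t h2 hT n hn i hi
    obtain ⟨hi1, hi2⟩ := Finset.mem_Icc.mp hi
    have e1 : (goodSol P).f i 0 t n = goodW P i t n := by simp [goodSol]
    have e2 : (goodSol P).x i 0 (t - 1) = 1 := if_pos (Or.inl ⟨hi1, hi2, rfl⟩)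
    rw [e1, e2, mul_one]
    exact le_trans (goodW_le P hSa hi (by omega) hT hn) (EB_le_Q P hQ hi)
  · -- C4
    intro t h2 hT n hn i hi j hj hij
    have hj0 : j ≠ 0 := by
      obtain ⟨hj1, _⟩ := Finset.mem_Icc.mp hj; omega
    have hwj : goodW P j t n ≤ P.Q :=
      le_trans (goodW_le P hSa hj (by omega) hT hn) (EB_le_Q P hQ hj)
    have e1 : (goodSol P).f i j t n = 0 := if_neg hj0
    have ew : (goodSol P).w j t n = goodW P j t n := rfl
    rw [e1, ew]
    linarith
  · -- C5
    intro t h2 hT n hn i hi j hj hij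
    obtain ⟨hi1, hi2⟩ := Finset.mem_Icc.mp hi
    by_cases hj0 : j = 0
    · subst hj0
      have e1 : (goodSol P).f i 0 t n = goodW P i t n := by simp [goodSol]
      have e2 : (goodSol P).x i 0 (t - 1) = 1 := if_pos (Or.inl ⟨hi1, hi2, rfl⟩)
      have ew : (goodSol P).w i t n = goodW P i t n := rfl
      rw [e1, e2, ew]
      have := P.hMbig
      nlinarith
    · have hx : ¬((1 ≤ i ∧ i ≤ P.Nb ∧ j = 0) ∨ (i = 0 ∧ 1 ≤ j ∧ j ≤ P.Nb)) := by
        obtain ⟨_, hjle⟩ := Finset.mem_Icc.mp hj; omega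
      have e1 : (goodSol P).f i j t n = 0 := if_neg hj0
      have e2 : (goodSol P).x i j (t - 1) = 0 := if_neg hx
      have ew : (goodSol P).w i t n = goodW P i t n := rfl
      rw [e1, e2, ew]
      have hle : goodW P i t n ≤ P.Mbig :=
        le_trans (le_trans (goodW_le P hSa hi (by omega) hT hn) (EB_le_Q P hQ hi)) hM
      linarith
  · -- C6
    intro t h1 h2 i hi
    obtain ⟨hi1, hi2⟩ := Finset.mem_Icc.mp hi
    have key : ∀ j ∈ P.Iall.erase i,
        (goodSol P).x i j t = if j = 0 then (fun _ => (1:ℝ)) j else 0 := by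
      intro j hj
      have hcond : ((1 ≤ i ∧ i ≤ P.Nb ∧ j = 0) ∨ (i = 0 ∧ 1 ≤ j ∧ j ≤ P.Nb)) ↔ j = 0 := by
        omega
      simp only [goodSol, hcond]
    rw [Finset.sum_congr rfl key, Finset.sum_ite_eq' (P.Iall.erase i) 0 (fun _ => (1:ℝ)),
      if_pos (Finset.mem_erase.mpr ⟨by omega, hzero⟩)]
    rfl
  · -- C7
    intro t h1 h2 j hj
    obtain ⟨hj1, hj2⟩ := Finset.mem_Icc.mp hj
    have key : ∀ i ∈ P.Iall.erase j,
        (goodSol P).x i j t = if i = 0 then (fun _ => (1:ℝ)) i else 0 := by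
      intro i hi
      have hcond : ((1 ≤ i ∧ i ≤ P.Nb ∧ j = 0) ∨ (i = 0 ∧ 1 ≤ j ∧ j ≤ P.Nb)) ↔ i = 0 := by
        omega
      simp only [goodSol, hcond]
    rw [Finset.sum_congr rfl key, Finset.sum_ite_eq' (P.Iall.erase j) 0 (fun _ => (1:ℝ)),
      if_pos (Finset.mem_erase.mpr ⟨by omega, hzero⟩)]
    rfl
  · -- C8
    intro t h1 h2
    have l : ∀ i ∈ P.Ibins, (goodSol P).x i 0 t = 1 := by
      intro i hi
      obtain ⟨hi1, hi2⟩ := Finset.mem_Icc.mp hi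
      exact if_pos (Or.inl ⟨hi1, hi2, rfl⟩)
    have r : ∀ j ∈ P.Ibins, (goodSol P).x 0 j t = 1 := by
      intro j hj
      obtain ⟨hj1, hj2⟩ := Finset.mem_Icc.mp hj
      exact if_pos (Or.inr ⟨rfl, hj1, hj2⟩)
    rw [Finset.sum_congr rfl l, Finset.sum_congr rfl r]
  · -- C9
    intro t h2 hT n hn i hi
    have : (goodSol P).y i (t - 1) = 1 := rfl
    rw [this, mul_one]
    exact goodW_le P hSa hi (by omega) hT hn
  · -- C10
    intro t h2 hT n hn i hi
    have ht1 : t ≠ 1 := by omega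
    simp [goodSol, ht1]
  · -- C12
    intro t h2 hT n hn i hi
    have ht1 : t ≠ 1 := by omega
    by_cases h : t = 2
    · subst h
      simp [goodSol, goodW]
      ring
    · have ht2 : t - 1 ≠ 1 := by omega
      simp [goodSol, goodW, ht1, ht2, h]
  · -- C13
    intro t h2 hT n hn i hi
    have ha := P.ha i hi t (by omega) hT n hn
    have hEB : 0 ≤ P.E i * P.B := mul_nonneg (P.hE i hi) P.hB
    by_cases h : t = 2
    · subst h
      have hSan := hSa i hi n hn
      have eu : (goodSol P).u i (2 - 1) (P.tree.pa 2 n) = P.E i * P.B * P.S i := by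
        simp [goodSol]
      rw [eu]
      nlinarith
    · have ht2 : t - 1 ≠ 1 := by omega
      have eu : (goodSol P).u i (t - 1) (P.tree.pa t n) = 0 := if_neg ht2
      rw [eu]
      nlinarith [ha.2]

private lemma profit_formula (P : ModelM) (hC0 : P.C = 0) (s : Sol) :
    profit P s = P.R * ∑ i ∈ P.Ibins, ∑ t ∈ Finset.Icc 2 P.T,
      ∑ n ∈ P.tree.N t, P.tree.prob t n * s.w i t n := by
  unfold profit subObj
  rw [hC0, zero_mul, sub_zero]
  congr 1
  rw [show (∑ t ∈ Finset.Icc (1+1) P.T, ∑ n ∈ P.tree.N t,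
        P.tree.prob t n * ∑ i ∈ P.Ibins, s.w i t n)
      = ∑ t ∈ Finset.Icc 2 P.T, ∑ i ∈ P.Ibins, ∑ n ∈ P.tree.N t,
        P.tree.prob t n * s.w i t n from
    Finset.sum_congr rfl fun t _ => by
      rw [← Finset.sum_comm]
      exact Finset.sum_congr rfl fun n _ => Finset.mul_sum _ _ _]
  exact Finset.sum_comm

/-- Proposition 1: in model `M`, if `C = 0` (and `R ≥ 0`, part of the model
data), `Q ≥ B Σ_{i∈I'} E_i`, `M ≥ Q` and `S_i + a_i^n ≤ 1` for every `i ∈ I'`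
and `n ∈ N²`, then the optimal profit is attained and
`z* = R B Σ_{i∈I'} E_i (S_i + Σ_{t=2}^T E[a_i^(t)])`. -/
theorem optimal_profit_of_C_eq_zero (P : ModelM) (hC0 : P.C = 0)
    (hQ : P.B * ∑ i ∈ P.Ibins, P.E i ≤ P.Q) (hM : P.Q ≤ P.Mbig)
    (hSa : ∀ i ∈ P.Ibins, ∀ n ∈ P.tree.N 2, P.S i + P.a i 2 n ≤ 1) :
    ∃ s : Sol, Feasible P s ∧
      profit P s = P.R * P.B * ∑ i ∈ P.Ibins,
        P.E i * (P.S i + ∑ t ∈ Finset.Icc 2 P.T, ∑ n ∈ P.tree.N t,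
          P.tree.prob t n * P.a i t n) ∧
      ∀ s' : Sol, Feasible P s' → profit P s' ≤ profit P s := by
  set A : ℕ → ℝ := fun i => ∑ t ∈ Finset.Icc 2 P.T, ∑ n ∈ P.tree.N t,
    P.tree.prob t n * P.a i t n with hA
  have hroot_mem : P.tree.root ∈ P.tree.N 1 := by
    rw [P.tree.hroot]; exact Finset.mem_singleton_self _
  have hU1 : ∀ (s : Sol), Feasible P s → ∀ i ∈ P.Ibins,
      ∑ n ∈ P.tree.N 1, P.tree.prob 1 n * s.u i 1 n = P.E i * P.B * P.S i := by
    intro s hs i hi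
    rw [P.tree.hroot, Finset.sum_singleton, P.tree.hprob_root, one_mul]
    exact hs.1 i hi P.tree.root hroot_mem
  have hkey : ∀ (s : Sol), Feasible P s → ∀ i ∈ P.Ibins,
      ∑ t ∈ Finset.Icc 2 P.T, ∑ n ∈ P.tree.N t, P.tree.prob t n * s.w i t n
        = P.E i * P.B * P.S i
          - (∑ n ∈ P.tree.N P.T, P.tree.prob P.T n * s.u i P.T n)
          + P.E i * P.B * A i := by
    intro s hs i hi
    rw [rev_telescope P (fun i _ => P.E i * P.B * P.S i) s hs i hi, hU1 s hs i hi]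
  have hUT0 : ∀ i ∈ P.Ibins,
      ∑ n ∈ P.tree.N P.T, P.tree.prob P.T n * (goodSol P).u i P.T n = 0 := by
    intro i hi
    have hT1 : P.T ≠ 1 := by have := P.hT; omega
    simp [goodSol, hT1]
  have hfeas := goodSol_feasible P hQ hM hSa
  refine ⟨goodSol P, hfeas, ?_, ?_⟩
  · rw [profit_formula P hC0,
      Finset.sum_congr rfl fun i hi => by rw [hkey _ hfeas i hi, hUT0 i hi]]
    have hsum : ∑ i ∈ P.Ibins, (P.E i * P.B * P.S i - 0 + P.E i * P.B * A i)
        = P.B * ∑ i ∈ P.Ibins, P.E i * (P.S i + A i) := by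
      rw [Finset.mul_sum]
      exact Finset.sum_congr rfl fun i _ => by ring
    rw [hsum]; ring
  · intro s' hs'
    rw [profit_formula P hC0, profit_formula P hC0]
    refine mul_le_mul_of_nonneg_left (Finset.sum_le_sum fun i hi => ?_) P.hR
    rw [hkey _ hs' i hi, hkey _ hfeas i hi, hUT0 i hi]
    have hT1 : 1 ≤ P.T := by have := P.hT; omega
    have hUT' : 0 ≤ ∑ n ∈ P.tree.N P.T, P.tree.prob P.T n * s'.u i P.T n := by
      refine Finset.sum_nonneg fun n hn => mul_nonneg
        (P.tree.hprob_nonneg P.T hT1 le_rfl n hn)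
        (hs'.2.2.2.2.2.1 P.T hT1 le_rfl n hn i hi)
    linarith
end

section
/- (Base case of Proposition 1.) In model M with T = 2, assume C = 0, R ≥ 0, Q ≥ B Σ_{i∈I'} E_i, M ≥ Q, and S_i + a_i^n ≤ 1 for every i ∈ I' and every n ∈ N^2. Then the optimal profit is attained by some feasible solution and z* = R B Σ_{i∈I'} E_i ( S_i + E[a_i^(2)] ). -/
/-- Candidate optimal solution for the two-stage case: visit every bin along
the tour `0 → 1 → 2 → ⋯ → Nb → 0`, empty every bin completely. -/
noncomputable def optSol (P : ModelM) : Sol where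
  x := fun i j _ =>
    if (1 ≤ i ∧ i < P.Nb ∧ j = i + 1) ∨ (i = 0 ∧ j = 1) ∨ (i = P.Nb ∧ j = 0) then 1 else 0
  y := fun _ _ => 1
  f := fun i j t n =>
    if (1 ≤ i ∧ i < P.Nb ∧ j = i + 1) ∨ (i = P.Nb ∧ j = 0) then
      ∑ k ∈ Finset.Icc 1 i, P.E k * P.B * (P.S k + P.a k t n)
    else 0
  w := fun i t n => P.E i * P.B * (P.S i + P.a i t n)
  u := fun i t _ => if t ≤ 1 then P.E i * P.B * P.S i else 0

lemma optSol_x (P : ModelM) (i j t : ℕ) : (optSol P).x i j t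
    = if (1 ≤ i ∧ i < P.Nb ∧ j = i + 1) ∨ (i = 0 ∧ j = 1) ∨ (i = P.Nb ∧ j = 0) then 1 else 0 :=
  rfl

lemma optSol_y (P : ModelM) (i t : ℕ) : (optSol P).y i t = 1 := rfl

lemma optSol_f (P : ModelM) (i j t n : ℕ) : (optSol P).f i j t n
    = if (1 ≤ i ∧ i < P.Nb ∧ j = i + 1) ∨ (i = P.Nb ∧ j = 0) then
        ∑ k ∈ Finset.Icc 1 i, P.E k * P.B * (P.S k + P.a k t n)
      else 0 := rfl

lemma optSol_w (P : ModelM) (i t n : ℕ) : (optSol P).w i t n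
    = P.E i * P.B * (P.S i + P.a i t n) := rfl

lemma optSol_u (P : ModelM) (i t n : ℕ) : (optSol P).u i t n
    = if t ≤ 1 then P.E i * P.B * P.S i else 0 := rfl

/-- Base case of Proposition 1 (`T = 2`): in model `M` with `C = 0`
(and `R ≥ 0`, part of the model data), `Q ≥ B Σ_{i∈I'} E_i`, `M ≥ Q` and
`S_i + a_i^n ≤ 1` for every `i ∈ I'` and `n ∈ N²`, the optimal profit is
attained and `z* = R B Σ_{i∈I'} E_i (S_i + E[a_i^(2)])`. -/
theorem optimal_profit_two_stage_of_C_eq_zero (P : ModelM) (hT2 : P.T = 2)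
    (hC0 : P.C = 0)
    (hQ : P.B * ∑ i ∈ P.Ibins, P.E i ≤ P.Q) (hM : P.Q ≤ P.Mbig)
    (hSa : ∀ i ∈ P.Ibins, ∀ n ∈ P.tree.N 2, P.S i + P.a i 2 n ≤ 1) :
    ∃ s : Sol, Feasible P s ∧
      profit P s = P.R * P.B * ∑ i ∈ P.Ibins,
        P.E i * (P.S i + ∑ n ∈ P.tree.N 2, P.tree.prob 2 n * P.a i 2 n) ∧
      ∀ s' : Sol, Feasible P s' → profit P s' ≤ profit P s := by
  have hT := P.hT
  have hNb := P.hNb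
  -- basic bounds on the collected amounts
  have hwpos : ∀ n ∈ P.tree.N 2, ∀ k ∈ Finset.Icc 1 P.Nb,
      0 ≤ P.E k * P.B * (P.S k + P.a k 2 n) := by
    intro n hn k hk
    exact mul_nonneg (mul_nonneg (P.hE k hk) P.hB)
      (add_nonneg (P.hS k hk).1 (P.ha k hk 2 le_rfl (by omega) n hn).1)
  have hwle : ∀ n ∈ P.tree.N 2, ∀ k ∈ Finset.Icc 1 P.Nb,
      P.E k * P.B * (P.S k + P.a k 2 n) ≤ P.E k * P.B := by
    intro n hn k hk
    have h1 := hSa k hk n hn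
    have h2 := mul_nonneg (P.hE k hk) P.hB
    nlinarith
  have hEBQ : ∀ m, m ≤ P.Nb → (∑ k ∈ Finset.Icc 1 m, P.E k * P.B) ≤ P.Q := by
    intro m hm
    have h1 : (∑ k ∈ Finset.Icc 1 m, P.E k * P.B) ≤ ∑ k ∈ Finset.Icc 1 P.Nb, P.E k * P.B :=
      Finset.sum_le_sum_of_subset_of_nonneg (Finset.Icc_subset_Icc_right hm)
        (fun k hk _ => mul_nonneg (P.hE k hk) P.hB)
    have h2 : (∑ k ∈ Finset.Icc 1 P.Nb, P.E k * P.B)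
        = P.B * ∑ k ∈ Finset.Icc 1 P.Nb, P.E k := by
      rw [← Finset.sum_mul, mul_comm]
    have h3 : P.B * (∑ i ∈ Finset.Icc 1 P.Nb, P.E i) ≤ P.Q := hQ
    linarith
  have hSQ : ∀ n ∈ P.tree.N 2, ∀ m, m ≤ P.Nb →
      (∑ k ∈ Finset.Icc 1 m, P.E k * P.B * (P.S k + P.a k 2 n))
        ≤ ∑ k ∈ Finset.Icc 1 m, P.E k * P.B := by
    intro n hn m hm
    exact Finset.sum_le_sum (fun k hk => hwle n hn k (Finset.Icc_subset_Icc_right hm hk))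
  -- evaluation of the routing sums
  have houtx : ∀ i ∈ P.Ibins, (∑ j ∈ P.Iall.erase i, (optSol P).x i j 1) = 1 := by
    intro i hi
    simp only [ModelM.Ibins, Finset.mem_Icc] at hi
    have htr : ∀ j ∈ P.Iall.erase i, (optSol P).x i j 1
        = if j = (if i = P.Nb then 0 else i + 1) then 1 else 0 := by
      intro j hj
      simp only [ModelM.Iall, Finset.mem_erase, Finset.mem_Icc] at hj
      rw [optSol_x]
      by_cases hiN : i = P.Nb
      · rw [if_pos hiN]; split_ifs <;> first | rfl | omega
      · rw [if_neg hiN]; split_ifs <;> first | rfl | omega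
    rw [Finset.sum_congr rfl htr, Finset.sum_ite_eq', if_pos]
    by_cases hiN : i = P.Nb
    · rw [if_pos hiN]
      simp only [ModelM.Iall, Finset.mem_erase, Finset.mem_Icc]
      omega
    · rw [if_neg hiN]
      simp only [ModelM.Iall, Finset.mem_erase, Finset.mem_Icc]
      omega
  have hinx : ∀ j ∈ P.Ibins, (∑ i ∈ P.Iall.erase j, (optSol P).x i j 1) = 1 := by
    intro j hj
    simp only [ModelM.Ibins, Finset.mem_Icc] at hj
    have htr : ∀ i ∈ P.Iall.erase j, (optSol P).x i j 1
        = if i = (if j = 1 then 0 else j - 1) then 1 else 0 := by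
      intro i hi
      simp only [ModelM.Iall, Finset.mem_erase, Finset.mem_Icc] at hi
      rw [optSol_x]
      by_cases hj1 : j = 1
      · rw [if_pos hj1]; split_ifs <;> first | rfl | omega
      · rw [if_neg hj1]; split_ifs <;> first | rfl | omega
    rw [Finset.sum_congr rfl htr, Finset.sum_ite_eq', if_pos]
    by_cases hj1 : j = 1
    · rw [if_pos hj1]
      simp only [ModelM.Iall, Finset.mem_erase, Finset.mem_Icc]
      omega
    · rw [if_neg hj1]
      simp only [ModelM.Iall, Finset.mem_erase, Finset.mem_Icc]
      omega
  -- evaluation of the flow sums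
  have houtf : ∀ n, ∀ i ∈ P.Ibins, (∑ j ∈ P.Iall.erase i, (optSol P).f i j 2 n)
      = ∑ k ∈ Finset.Icc 1 i, P.E k * P.B * (P.S k + P.a k 2 n) := by
    intro n i hi
    simp only [ModelM.Ibins, Finset.mem_Icc] at hi
    have htr : ∀ j ∈ P.Iall.erase i, (optSol P).f i j 2 n
        = if j = (if i = P.Nb then 0 else i + 1) then
            (∑ k ∈ Finset.Icc 1 i, P.E k * P.B * (P.S k + P.a k 2 n)) else 0 := by
      intro j hj
      simp only [ModelM.Iall, Finset.mem_erase, Finset.mem_Icc] at hj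
      rw [optSol_f]
      by_cases hiN : i = P.Nb
      · rw [if_pos hiN]; split_ifs <;> first | rfl | omega
      · rw [if_neg hiN]; split_ifs <;> first | rfl | omega
    rw [Finset.sum_congr rfl htr, Finset.sum_ite_eq', if_pos]
    by_cases hiN : i = P.Nb
    · rw [if_pos hiN]
      simp only [ModelM.Iall, Finset.mem_erase, Finset.mem_Icc]
      omega
    · rw [if_neg hiN]
      simp only [ModelM.Iall, Finset.mem_erase, Finset.mem_Icc]
      omega
  have hinf : ∀ n, ∀ i ∈ P.Ibins, (∑ j ∈ P.Ibins.erase i, (optSol P).f j i 2 n)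
      = ∑ k ∈ Finset.Icc 1 (i - 1), P.E k * P.B * (P.S k + P.a k 2 n) := by
    intro n i hi
    simp only [ModelM.Ibins, Finset.mem_Icc] at hi
    by_cases h2 : 2 ≤ i
    · have htr : ∀ j ∈ P.Ibins.erase i, (optSol P).f j i 2 n
          = if j = i - 1 then
              (∑ k ∈ Finset.Icc 1 j, P.E k * P.B * (P.S k + P.a k 2 n)) else 0 := by
        intro j hj
        simp only [ModelM.Ibins, Finset.mem_erase, Finset.mem_Icc] at hj
        rw [optSol_f]
        split_ifs <;> first | rfl | omega
      rw [Finset.sum_congr rfl htr, Finset.sum_ite_eq', if_pos]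
      simp only [ModelM.Ibins, Finset.mem_erase, Finset.mem_Icc]; omega
    · have hi1 : i = 1 := by omega
      subst hi1
      have hz : ∀ j ∈ P.Ibins.erase 1, (optSol P).f j 1 2 n = 0 := by
        intro j hj
        simp only [ModelM.Ibins, Finset.mem_erase, Finset.mem_Icc] at hj
        rw [optSol_f, if_neg (by omega)]
      rw [Finset.sum_eq_zero hz]
      simp
  -- the probabilities at stage 2 sum to 1
  have hsum1 : (∑ n ∈ P.tree.N 2, P.tree.prob 2 n) = 1 := by
    have hfil : (P.tree.N 2).filter (fun n => P.tree.pa 2 n = P.tree.root) = P.tree.N 2 := by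
      apply Finset.filter_true_of_mem
      intro n hn
      have h := P.tree.hpa 2 le_rfl (by omega) n hn
      rw [show (2 : ℕ) - 1 = 1 from rfl, P.tree.hroot] at h
      exact Finset.mem_singleton.mp h
    have h := P.tree.hprob_sum 2 le_rfl (by omega) P.tree.root
      (by rw [show (2 : ℕ) - 1 = 1 from rfl, P.tree.hroot]; exact Finset.mem_singleton_self _)
    rw [show (2 : ℕ) - 1 = 1 from rfl, P.tree.hprob_root, hfil] at h
    exact h.symm
  -- the value of the expected collected waste
  have hkey : (∑ n ∈ P.tree.N 2, P.tree.prob 2 n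
        * ∑ i ∈ P.Ibins, P.E i * P.B * (P.S i + P.a i 2 n))
      = P.B * ∑ i ∈ P.Ibins,
          P.E i * (P.S i + ∑ n ∈ P.tree.N 2, P.tree.prob 2 n * P.a i 2 n) := by
    simp only [Finset.mul_sum]
    rw [Finset.sum_comm]
    apply Finset.sum_congr rfl
    intro i _
    calc (∑ n ∈ P.tree.N 2, P.tree.prob 2 n * (P.E i * P.B * (P.S i + P.a i 2 n)))
        = ∑ n ∈ P.tree.N 2, (P.E i * P.B * P.S i * P.tree.prob 2 n
            + P.E i * P.B * (P.tree.prob 2 n * P.a i 2 n)) := by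
          apply Finset.sum_congr rfl; intro n _; ring
      _ = P.E i * P.B * P.S i * (∑ n ∈ P.tree.N 2, P.tree.prob 2 n)
            + P.E i * P.B * ∑ n ∈ P.tree.N 2, P.tree.prob 2 n * P.a i 2 n := by
          rw [Finset.sum_add_distrib, ← Finset.mul_sum, ← Finset.mul_sum]
      _ = P.B * (P.E i * (P.S i + ∑ n ∈ P.tree.N 2, P.tree.prob 2 n * P.a i 2 n)) := by
          rw [hsum1]; ring
  refine ⟨optSol P, ?_, ?_, ?_⟩
  · -- feasibility
    show FeasOn P 1 P.T _ _
    rw [hT2]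
    refine ⟨?_, ?_, ?_, ?_, ?_, ?_, ?_, ?_, ?_, ?_, ?_, ?_, ?_, ?_, ?_, ?_, ?_, ?_⟩
    · intro i hi n hn
      rw [optSol_u, if_pos le_rfl]
    · intro t ht1 ht2 i hi j hj hij
      rw [optSol_x]; split_ifs <;> simp
    · intro t ht1 ht2 i hi; exact Or.inr rfl
    · intro t ht1 ht2 n hn i hi j hj hij
      have ht : t = 2 := by omega
      subst ht
      rw [optSol_f]
      split_ifs with h
      · exact Finset.sum_nonneg
          (fun k hk => hwpos n hn k (Finset.Icc_subset_Icc_right (by omega) hk))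
      · exact le_rfl
    · intro t ht1 ht2 n hn i hi
      have ht : t = 2 := by omega
      subst ht
      rw [optSol_w]
      exact hwpos n hn i hi
    · intro t ht1 ht2 n hn i hi
      rw [optSol_u]
      split_ifs
      · exact mul_nonneg (mul_nonneg (P.hE i hi) P.hB) (P.hS i hi).1
      · exact le_rfl
    · -- C1
      intro t ht1 ht2 n hn i hi
      have ht : t = 2 := by omega
      subst ht
      rw [houtf n i hi, hinf n i hi, optSol_w]
      have hi' : 1 ≤ i ∧ i ≤ P.Nb := by
        simpa only [ModelM.Ibins, Finset.mem_Icc] using hi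
      obtain ⟨i', rfl⟩ := Nat.exists_eq_succ_of_ne_zero (by omega : i ≠ 0)
      rw [show i' + 1 - 1 = i' from rfl, Finset.sum_Icc_succ_top (by omega : 1 ≤ i' + 1)]
      try rw [Nat.add_comm 1 i']
      ring
    · -- C2
      intro t ht1 ht2 n hn i hi j hj hij
      have ht : t = 2 := by omega
      subst ht
      simp only [ModelM.Ibins, Finset.mem_Icc] at hi hj
      rw [optSol_f, optSol_x]
      split_ifs with h1 h2 h2
      · have hji : j = i + 1 := by omega
        have hlt : i < P.Nb := by omega
        subst hji
        rw [mul_one]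
        have hA := hSQ n hn i (by omega)
        have hB2 := hEBQ (i + 1) (by omega)
        have hstep : (∑ k ∈ Finset.Icc 1 (i + 1), P.E k * P.B)
            = (∑ k ∈ Finset.Icc 1 i, P.E k * P.B) + P.E (i + 1) * P.B :=
          Finset.sum_Icc_succ_top (by omega) _
        have hmem : i + 1 ∈ Finset.Icc 1 P.Nb := Finset.mem_Icc.mpr ⟨by omega, by omega⟩
        have haB : P.E (i + 1) * P.B * P.a (i + 1) 2 n ≤ P.E (i + 1) * P.B := by
          have ha := P.ha (i + 1) hmem 2 le_rfl (by omega) n hn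
          nlinarith [mul_nonneg (P.hE (i + 1) hmem) P.hB]
        linarith
      · exfalso; omega
      · exfalso; omega
      · rw [mul_zero]
    · -- C3
      intro t ht1 ht2 n hn i hi
      have ht : t = 2 := by omega
      subst ht
      simp only [ModelM.Ibins, Finset.mem_Icc] at hi
      rw [optSol_f, optSol_x]
      by_cases hiN : i = P.Nb
      · subst hiN
        rw [if_pos (show (1 ≤ P.Nb ∧ P.Nb < P.Nb ∧ 0 = P.Nb + 1) ∨ (P.Nb = P.Nb ∧ (0 : ℕ) = 0)
              from Or.inr ⟨rfl, rfl⟩),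
          if_pos (show (1 ≤ P.Nb ∧ P.Nb < P.Nb ∧ 0 = P.Nb + 1) ∨ (P.Nb = 0 ∧ (0 : ℕ) = 1)
              ∨ (P.Nb = P.Nb ∧ (0 : ℕ) = 0) from Or.inr (Or.inr ⟨rfl, rfl⟩)), mul_one]
        linarith [hSQ n hn P.Nb le_rfl, hEBQ P.Nb le_rfl]
      · rw [if_neg (show ¬((1 ≤ i ∧ i < P.Nb ∧ 0 = i + 1) ∨ (i = P.Nb ∧ (0 : ℕ) = 0)) by omega),
          if_neg (show ¬((1 ≤ i ∧ i < P.Nb ∧ 0 = i + 1) ∨ (i = 0 ∧ (0 : ℕ) = 1)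
              ∨ (i = P.Nb ∧ (0 : ℕ) = 0)) by omega), mul_zero]
    · -- C4
      intro t ht1 ht2 n hn i hi j hj hij
      have ht : t = 2 := by omega
      subst ht
      simp only [ModelM.Ibins, Finset.mem_Icc] at hi hj
      rw [optSol_f, optSol_w]
      split_ifs with h1
      · have hji : j = i + 1 := by omega
        have hlt : i < P.Nb := by omega
        subst hji
        have hstep : (∑ k ∈ Finset.Icc 1 (i + 1), P.E k * P.B * (P.S k + P.a k 2 n))
            = (∑ k ∈ Finset.Icc 1 i, P.E k * P.B * (P.S k + P.a k 2 n))
              + P.E (i + 1) * P.B * (P.S (i + 1) + P.a (i + 1) 2 n) :=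
          Finset.sum_Icc_succ_top (by omega) _
        have hA := hSQ n hn (i + 1) (by omega)
        have hB2 := hEBQ (i + 1) (by omega)
        linarith
      · have hmem : j ∈ Finset.Icc 1 P.Nb := Finset.mem_Icc.mpr ⟨hj.1, hj.2⟩
        have h1 := hwle n hn j hmem
        have h2 : P.E j * P.B ≤ ∑ k ∈ Finset.Icc 1 P.Nb, P.E k * P.B :=
          Finset.single_le_sum (fun k hk => mul_nonneg (P.hE k hk) P.hB) hmem
        linarith [hEBQ P.Nb le_rfl]
    · -- C5
      intro t ht1 ht2 n hn i hi j hj hij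
      have ht : t = 2 := by omega
      subst ht
      simp only [ModelM.Ibins, Finset.mem_Icc] at hi
      simp only [ModelM.Iall, Finset.mem_Icc] at hj
      have hmem : i ∈ Finset.Icc 1 P.Nb := Finset.mem_Icc.mpr ⟨hi.1, hi.2⟩
      rw [optSol_w, optSol_f, optSol_x]
      split_ifs with hx hf hf
      · have hws : P.E i * P.B * (P.S i + P.a i 2 n)
            ≤ ∑ k ∈ Finset.Icc 1 i, P.E k * P.B * (P.S k + P.a k 2 n) :=
          Finset.single_le_sum
            (fun k hk => hwpos n hn k (Finset.Icc_subset_Icc_right hi.2 hk))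
            (Finset.mem_Icc.mpr ⟨hi.1, le_rfl⟩)
        nlinarith [P.hMbig]
      · exfalso; omega
      · exfalso; omega
      · have h1 := hwle n hn i hmem
        have h2 : P.E i * P.B ≤ ∑ k ∈ Finset.Icc 1 P.Nb, P.E k * P.B :=
          Finset.single_le_sum (fun k hk => mul_nonneg (P.hE k hk) P.hB) hmem
        have h3 := hEBQ P.Nb le_rfl
        nlinarith
    · -- C6
      intro t ht1 ht2 i hi
      have ht : t = 1 := by omega
      subst ht
      rw [houtx i hi]
      rfl
    · -- C7
      intro t ht1 ht2 j hj
      have ht : t = 1 := by omega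
      subst ht
      rw [hinx j hj]
      rfl
    · -- C8
      intro t ht1 ht2
      have ht : t = 1 := by omega
      subst ht
      have hL : (∑ i ∈ P.Ibins, (optSol P).x i 0 1) = 1 := by
        have htr : ∀ i ∈ P.Ibins, (optSol P).x i 0 1 = if i = P.Nb then 1 else 0 := by
          intro i hi
          simp only [ModelM.Ibins, Finset.mem_Icc] at hi
          rw [optSol_x]
          by_cases hiN : i = P.Nb
          · rw [if_pos (show (1 ≤ i ∧ i < P.Nb ∧ 0 = i + 1) ∨ (i = 0 ∧ (0 : ℕ) = 1)
                  ∨ (i = P.Nb ∧ (0 : ℕ) = 0) from Or.inr (Or.inr ⟨hiN, rfl⟩)), if_pos hiN]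
          · rw [if_neg (show ¬((1 ≤ i ∧ i < P.Nb ∧ 0 = i + 1) ∨ (i = 0 ∧ (0 : ℕ) = 1)
                  ∨ (i = P.Nb ∧ (0 : ℕ) = 0)) by omega), if_neg hiN]
        rw [Finset.sum_congr rfl htr, Finset.sum_ite_eq', if_pos]
        simp only [ModelM.Ibins, Finset.mem_Icc]; omega
      have hR : (∑ j ∈ P.Ibins, (optSol P).x 0 j 1) = 1 := by
        have htr : ∀ j ∈ P.Ibins, (optSol P).x 0 j 1 = if j = 1 then 1 else 0 := by
          intro j hj
          simp only [ModelM.Ibins, Finset.mem_Icc] at hj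
          rw [optSol_x]
          by_cases hj1 : j = 1
          · rw [if_pos (show (1 ≤ 0 ∧ 0 < P.Nb ∧ j = 0 + 1) ∨ ((0 : ℕ) = 0 ∧ j = 1)
                  ∨ (0 = P.Nb ∧ j = 0) from Or.inr (Or.inl ⟨rfl, hj1⟩)), if_pos hj1]
          · rw [if_neg (show ¬((1 ≤ 0 ∧ 0 < P.Nb ∧ j = 0 + 1) ∨ ((0 : ℕ) = 0 ∧ j = 1)
                  ∨ (0 = P.Nb ∧ j = 0)) by omega), if_neg hj1]
        rw [Finset.sum_congr rfl htr, Finset.sum_ite_eq', if_pos]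
        simp only [ModelM.Ibins, Finset.mem_Icc]; omega
      rw [hL, hR]
    · -- C9
      intro t ht1 ht2 n hn i hi
      have ht : t = 2 := by omega
      subst ht
      rw [optSol_w, optSol_y, mul_one]
      exact hwle n hn i hi
    · -- C10
      intro t ht1 ht2 n hn i hi
      have ht : t = 2 := by omega
      subst ht
      rw [optSol_u, optSol_y, if_neg (by omega)]
      norm_num
    · -- C12
      intro t ht1 ht2 n hn i hi
      have ht : t = 2 := by omega
      subst ht
      rw [optSol_u, optSol_u, optSol_w, if_neg (by omega), if_pos (by omega)]
      ring
    · -- C13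
      intro t ht1 ht2 n hn i hi
      have ht : t = 2 := by omega
      subst ht
      rw [optSol_u, if_pos (by omega)]
      have h1 := hSa i hi n hn
      have h2 := mul_nonneg (P.hE i hi) P.hB
      have h3 := (P.hS i hi).1
      have h4 := (P.ha i hi 2 le_rfl (by omega) n hn).1
      nlinarith
  · -- value of the profit
    simp only [profit, subObj, hT2, hC0, zero_mul, sub_zero]
    rw [show Finset.Icc (1 + 1) 2 = {2} from Finset.Icc_self 2, Finset.sum_singleton]
    have hinner : ∀ n ∈ P.tree.N 2, (∑ i ∈ P.Ibins, (optSol P).w i 2 n)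
        = ∑ i ∈ P.Ibins, P.E i * P.B * (P.S i + P.a i 2 n) :=
      fun n _ => Finset.sum_congr rfl (fun i _ => optSol_w P i 2 n)
    calc P.R * ∑ n ∈ P.tree.N 2, P.tree.prob 2 n * ∑ i ∈ P.Ibins, (optSol P).w i 2 n
        = P.R * ∑ n ∈ P.tree.N 2, P.tree.prob 2 n
            * ∑ i ∈ P.Ibins, P.E i * P.B * (P.S i + P.a i 2 n) := by
          rw [Finset.sum_congr rfl (fun n hn => by rw [hinner n hn])]
      _ = P.R * P.B * ∑ i ∈ P.Ibins,
            P.E i * (P.S i + ∑ n ∈ P.tree.N 2, P.tree.prob 2 n * P.a i 2 n) := by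
          rw [hkey]; ring
  · -- optimality
    intro s' hs'
    have hs2 : FeasOn P 1 2 (fun i _ => P.E i * P.B * P.S i) s' := by
      rw [← hT2]; exact hs'
    obtain ⟨hinit, -, -, -, -, hupos, -, -, -, -, -, -, -, -, -, -, hc12, -⟩ := hs2
    have hwb : ∀ n ∈ P.tree.N 2, ∀ i ∈ P.Ibins,
        s'.w i 2 n ≤ P.E i * P.B * (P.S i + P.a i 2 n) := by
      intro n hn i hi
      have h12 := hc12 2 le_rfl le_rfl n hn i hi
      have hpa : P.tree.pa 2 n ∈ P.tree.N 1 := by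
        have h := P.tree.hpa 2 le_rfl (by omega) n hn
        rwa [show (2 : ℕ) - 1 = 1 from rfl] at h
      have hu1 : s'.u i 1 (P.tree.pa 2 n) = P.E i * P.B * P.S i :=
        hinit i hi (P.tree.pa 2 n) hpa
      have hu2 := hupos 2 (by omega) le_rfl n hn i hi
      rw [show (2 : ℕ) - 1 = 1 from rfl, hu1] at h12
      have hexp : P.E i * P.B * (P.S i + P.a i 2 n)
          = P.E i * P.B * P.S i + P.E i * P.B * P.a i 2 n := by ring
      linarith
    simp only [profit, subObj, hT2, hC0, zero_mul, sub_zero]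
    rw [show Finset.Icc (1 + 1) 2 = {2} from Finset.Icc_self 2, Finset.sum_singleton,
      Finset.sum_singleton]
    apply mul_le_mul_of_nonneg_left _ P.hR
    apply Finset.sum_le_sum
    intro n hn
    apply mul_le_mul_of_nonneg_left _ (P.tree.hprob_nonneg 2 (by omega) (by omega) n hn)
    apply Finset.sum_le_sum
    intro i hi
    calc s'.w i 2 n ≤ P.E i * P.B * (P.S i + P.a i 2 n) := hwb n hn i hi
      _ = (optSol P).w i 2 n := (optSol_w P i 2 n).symm
end

section
/- In model M(v), assume C = 0, R ≥ 0, Q ≥ B Σ_{i∈I'} E_i, M ≥ Q, and v_i + E_i B a_i^n ≤ E_i B for every i ∈ I' and every n ∈ N^2. Then the optimal value of M(v) is attained by some feasible solution and equals R Σ_{i∈I'} v_i + R B Σ_{i∈I'} E_i E[a_i^(2)]; moreover, if R > 0, then every optimal solution of M(v) satisfies u_i^n = 0 for all i ∈ I' and all n ∈ N^2 with π^n > 0. -/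
/-! ### Auxiliary constructions for the tour solution -/

/-- Successor on the cycle `0 → 1 → ⋯ → Nb → 0`. -/
def succF (Nb i : ℕ) : ℕ := if i = Nb then 0 else i + 1

/-- Routing variables of the single tour `0 → 1 → ⋯ → Nb → 0`. -/
def tourX (Nb i j : ℕ) : ℝ := if j = succF Nb i then 1 else 0

lemma tourX_cases (Nb i j : ℕ) : tourX Nb i j = 0 ∨ tourX Nb i j = 1 := by
  unfold tourX; split <;> simp

lemma tourX_nonneg (Nb i j : ℕ) : 0 ≤ tourX Nb i j := by
  unfold tourX; split <;> norm_num

lemma tourX_eq_pred (Nb j : ℕ) (hNb : 1 ≤ Nb) (hj1 : 1 ≤ j) (hj : j ≤ Nb) (i : ℕ) :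
    tourX Nb i j = if i = j - 1 then 1 else 0 := by
  unfold tourX succF
  by_cases hi : i = Nb <;> simp only [hi, if_pos, if_neg, ite_true, ite_false] <;>
    split_ifs <;> first | rfl | omega

lemma tourX_sum_out (Nb : ℕ) (hNb : 1 ≤ Nb) (i : ℕ) (hi : i ≤ Nb) :
    ∑ j ∈ (Finset.Icc 0 Nb).erase i, tourX Nb i j = 1 := by
  unfold tourX
  rw [Finset.sum_ite_eq' ((Finset.Icc 0 Nb).erase i) (succF Nb i) (fun _ => (1:ℝ)), if_pos]
  simp only [Finset.mem_erase, Finset.mem_Icc, succF]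
  split <;> omega

lemma tourX_sum_in (Nb : ℕ) (hNb : 1 ≤ Nb) (j : ℕ) (hj1 : 1 ≤ j) (hj : j ≤ Nb) :
    ∑ i ∈ (Finset.Icc 0 Nb).erase j, tourX Nb i j = 1 := by
  rw [Finset.sum_congr rfl (fun i _ => tourX_eq_pred Nb j hNb hj1 hj i),
    Finset.sum_ite_eq' _ (j - 1) (fun _ => (1:ℝ)), if_pos]
  simp only [Finset.mem_erase, Finset.mem_Icc]; omega

lemma tourX_sum_i0 (Nb : ℕ) (hNb : 1 ≤ Nb) :
    ∑ i ∈ Finset.Icc 1 Nb, tourX Nb i 0 = 1 := by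
  have h : ∀ i, tourX Nb i 0 = if i = Nb then (1:ℝ) else 0 := by
    intro i
    by_cases hi : i = Nb
    · subst hi; simp [tourX, succF]
    · have hne : ¬ ((0:ℕ) = succF Nb i) := by unfold succF; rw [if_neg hi]; omega
      unfold tourX
      rw [if_neg hne, if_neg hi]
  rw [Finset.sum_congr rfl fun i _ => h i,
    Finset.sum_ite_eq' _ Nb (fun _ => (1:ℝ)), if_pos]
  simp only [Finset.mem_Icc]; omega

lemma tourX_sum_0j (Nb : ℕ) (hNb : 1 ≤ Nb) :
    ∑ j ∈ Finset.Icc 1 Nb, tourX Nb 0 j = 1 := by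
  unfold tourX
  rw [Finset.sum_ite_eq' _ (succF Nb 0) (fun _ => (1:ℝ)), if_pos]
  simp only [Finset.mem_Icc, succF]
  split <;> omega

/-- The explicit solution of `M(v)`: the single tour `0 → 1 → ⋯ → Nb → 0` at
stage 1, every bin visited and emptied completely. -/
def tourSol (P : ModelM) (v : ℕ → ℝ) : Sol where
  x := fun i j _ => tourX P.Nb i j
  y := fun _ _ => 1
  f := fun i j _ n => tourX P.Nb i j * ∑ k ∈ Finset.Icc 1 i, (v k + P.E k * P.B * P.a k 2 n)
  w := fun i _ n => v i + P.E i * P.B * P.a i 2 n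
  u := fun i t _ => if t ≤ 1 then v i else 0

/-- In model `M(v)` (the two-stage case of `M` with `u i root = v i`), if
`C = 0` (and `R ≥ 0`, part of the model data), `Q ≥ B Σ_{i∈I'} E_i`, `M ≥ Q`
and `v_i + E_i B a_i^n ≤ E_i B` for every `i ∈ I'`, `n ∈ N²`, then the optimal
value is attained and equals `R Σ_{i∈I'} v_i + R B Σ_{i∈I'} E_i E[a_i^(2)]`;
moreover, if `R > 0`, every optimal solution has `u_i^n = 0` for all `i ∈ I'`
and all `n ∈ N²` with `π^n > 0`. -/
theorem Mv_optimal_value_and_zero_inventory (P : ModelM) (hT2 : P.T = 2)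
    (v : ℕ → ℝ) (hv : ∀ i ∈ P.Ibins, 0 ≤ v i)
    (hC0 : P.C = 0)
    (hQ : P.B * ∑ i ∈ P.Ibins, P.E i ≤ P.Q) (hM : P.Q ≤ P.Mbig)
    (hva : ∀ i ∈ P.Ibins, ∀ n ∈ P.tree.N 2,
      v i + P.E i * P.B * P.a i 2 n ≤ P.E i * P.B) :
    (∃ s : Sol, MvFeasible P v s ∧
        subObj P 1 2 s
          = P.R * ∑ i ∈ P.Ibins, v i
            + P.R * P.B * ∑ i ∈ P.Ibins,
                P.E i * ∑ n ∈ P.tree.N 2, P.tree.prob 2 n * P.a i 2 n ∧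
        ∀ s' : Sol, MvFeasible P v s' → subObj P 1 2 s' ≤ subObj P 1 2 s) ∧
    (0 < P.R → ∀ s : Sol, MvFeasible P v s →
        (∀ s' : Sol, MvFeasible P v s' → subObj P 1 2 s' ≤ subObj P 1 2 s) →
        ∀ i ∈ P.Ibins, ∀ n ∈ P.tree.N 2, 0 < P.tree.prob 2 n → s.u i 2 n = 0) := by
  classical
  have hN2T : (2:ℕ) ≤ P.T := le_of_eq hT2.symm
  have hroot1 : P.tree.root ∈ P.tree.N 1 := by
    rw [P.tree.hroot]; exact Finset.mem_singleton_self _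
  have hpa2 : ∀ n ∈ P.tree.N 2, P.tree.pa 2 n = P.tree.root := by
    intro n hn
    have h := P.tree.hpa 2 le_rfl hN2T n hn
    rw [show (2:ℕ) - 1 = 1 from rfl, P.tree.hroot, Finset.mem_singleton] at h
    exact h
  have hprob1 : ∑ n ∈ P.tree.N 2, P.tree.prob 2 n = 1 := by
    have h := P.tree.hprob_sum 2 le_rfl hN2T P.tree.root
      (by rw [show (2:ℕ) - 1 = 1 from rfl]; exact hroot1)
    rw [show (2:ℕ) - 1 = 1 from rfl, P.tree.hprob_root,
      Finset.filter_true_of_mem (fun n hn => hpa2 n hn)] at h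
    exact h.symm
  have hprobnn : ∀ n ∈ P.tree.N 2, 0 ≤ P.tree.prob 2 n :=
    fun n hn => P.tree.hprob_nonneg 2 (by norm_num) hN2T n hn
  have ha2 : ∀ i ∈ P.Ibins, ∀ n ∈ P.tree.N 2, 0 ≤ P.a i 2 n ∧ P.a i 2 n ≤ 1 :=
    fun i hi n hn => P.ha i hi 2 le_rfl hN2T n hn
  set target : ℝ := P.R * ∑ i ∈ P.Ibins, v i
      + P.R * P.B * ∑ i ∈ P.Ibins,
          P.E i * ∑ n ∈ P.tree.N 2, P.tree.prob 2 n * P.a i 2 n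
    with htarget
  -- the key value identity for any feasible solution
  have key : ∀ s' : Sol, MvFeasible P v s' →
      subObj P 1 2 s'
        = target - P.R * ∑ n ∈ P.tree.N 2,
            P.tree.prob 2 n * ∑ i ∈ P.Ibins, s'.u i 2 n := by
    intro s' hs'
    obtain ⟨h0, -, -, -, -, -, -, -, -, -, -, -, -, -, -, -, c12, -⟩ := hs'
    have hw' : ∀ n ∈ P.tree.N 2, ∀ i ∈ P.Ibins,
        s'.w i 2 n = v i + P.E i * P.B * P.a i 2 n - s'.u i 2 n := by
      intro n hn i hi
      have h := c12 2 (by norm_num) (by norm_num) n hn i hi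
      have h0' : s'.u i 1 P.tree.root = v i := h0 i hi P.tree.root hroot1
      rw [show (2:ℕ) - 1 = 1 from rfl, hpa2 n hn, h0'] at h
      linarith
    have hsum : ∀ n ∈ P.tree.N 2, ∑ i ∈ P.Ibins, s'.w i 2 n
        = (∑ i ∈ P.Ibins, v i) + (∑ i ∈ P.Ibins, P.E i * P.B * P.a i 2 n)
          - ∑ i ∈ P.Ibins, s'.u i 2 n := by
      intro n hn
      rw [Finset.sum_congr rfl fun i hi => hw' n hn i hi,
        Finset.sum_sub_distrib, Finset.sum_add_distrib]
    have hswap : ∑ n ∈ P.tree.N 2, P.tree.prob 2 n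
          * ∑ i ∈ P.Ibins, P.E i * P.B * P.a i 2 n
        = P.B * ∑ i ∈ P.Ibins,
            P.E i * ∑ n ∈ P.tree.N 2, P.tree.prob 2 n * P.a i 2 n := by
      simp only [Finset.mul_sum]
      rw [Finset.sum_comm]
      exact Finset.sum_congr rfl fun i _ => Finset.sum_congr rfl fun n _ => by ring
    have e2 : ∑ n ∈ P.tree.N 2, P.tree.prob 2 n * ∑ i ∈ P.Ibins, s'.w i 2 n
        = (∑ i ∈ P.Ibins, v i)
          + P.B * ∑ i ∈ P.Ibins,
              P.E i * ∑ n ∈ P.tree.N 2, P.tree.prob 2 n * P.a i 2 n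
          - ∑ n ∈ P.tree.N 2, P.tree.prob 2 n * ∑ i ∈ P.Ibins, s'.u i 2 n := by
      calc ∑ n ∈ P.tree.N 2, P.tree.prob 2 n * ∑ i ∈ P.Ibins, s'.w i 2 n
          = ∑ n ∈ P.tree.N 2, (P.tree.prob 2 n * ∑ i ∈ P.Ibins, v i
            + P.tree.prob 2 n * ∑ i ∈ P.Ibins, P.E i * P.B * P.a i 2 n
            - P.tree.prob 2 n * ∑ i ∈ P.Ibins, s'.u i 2 n) :=
            Finset.sum_congr rfl fun n hn => by rw [hsum n hn]; ring
        _ = _ := by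
            rw [Finset.sum_sub_distrib, Finset.sum_add_distrib, ← Finset.sum_mul, hprob1,
              one_mul, hswap]
    unfold subObj
    rw [show Finset.Icc (1 + 1) 2 = {2} from by norm_num,
      Finset.sum_singleton, e2, hC0, htarget]
    ring
  -- nonnegativity and capacity facts
  have hw0nn : ∀ i ∈ P.Ibins, ∀ n ∈ P.tree.N 2, 0 ≤ v i + P.E i * P.B * P.a i 2 n := by
    intro i hi n hn
    have h1 := hv i hi
    have h2 : 0 ≤ P.E i * P.B * P.a i 2 n :=
      mul_nonneg (mul_nonneg (P.hE i hi) P.hB) (ha2 i hi n hn).1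
    linarith
  have hw0le : ∀ i ∈ P.Ibins, ∀ n ∈ P.tree.N 2,
      v i + P.E i * P.B * P.a i 2 n ≤ P.B * P.E i := by
    intro i hi n hn
    have h := hva i hi n hn
    linarith [mul_comm P.B (P.E i)]
  have hcumnn : ∀ n ∈ P.tree.N 2, ∀ m, m ≤ P.Nb →
      0 ≤ ∑ k ∈ Finset.Icc 1 m, (v k + P.E k * P.B * P.a k 2 n) := by
    intro n hn m hm
    refine Finset.sum_nonneg fun k hk => ?_
    have hk' : k ∈ P.Ibins := by
      simp only [Finset.mem_Icc] at hk
      simp only [ModelM.Ibins, Finset.mem_Icc]; omega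
    exact hw0nn k hk' n hn
  have hcum_le : ∀ n ∈ P.tree.N 2, ∀ m, m ≤ P.Nb →
      ∑ k ∈ Finset.Icc 1 m, (v k + P.E k * P.B * P.a k 2 n)
        ≤ P.B * ∑ k ∈ Finset.Icc 1 m, P.E k := by
    intro n hn m hm
    rw [Finset.mul_sum]
    refine Finset.sum_le_sum fun k hk => ?_
    have hk' : k ∈ P.Ibins := by
      simp only [Finset.mem_Icc] at hk
      simp only [ModelM.Ibins, Finset.mem_Icc]; omega
    exact hw0le k hk' n hn
  have hEQ : ∀ m, m ≤ P.Nb → P.B * ∑ k ∈ Finset.Icc 1 m, P.E k ≤ P.Q := by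
    intro m hm
    refine le_trans ?_ hQ
    refine mul_le_mul_of_nonneg_left ?_ P.hB
    refine Finset.sum_le_sum_of_subset_of_nonneg ?_ fun k hk _ => P.hE k hk
    exact Finset.Icc_subset_Icc_right hm
  have hcumQ : ∀ n ∈ P.tree.N 2, ∀ m, m ≤ P.Nb →
      ∑ k ∈ Finset.Icc 1 m, (v k + P.E k * P.B * P.a k 2 n) ≤ P.Q :=
    fun n hn m hm => (hcum_le n hn m hm).trans (hEQ m hm)
  have hwQ : ∀ i ∈ P.Ibins, ∀ n ∈ P.tree.N 2,
      v i + P.E i * P.B * P.a i 2 n ≤ P.Q := by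
    intro i hi n hn
    refine (hw0le i hi n hn).trans (le_trans ?_ hQ)
    exact mul_le_mul_of_nonneg_left (Finset.single_le_sum (fun k hk => P.hE k hk) hi) P.hB
  -- feasibility of the tour solution
  have hfeas : MvFeasible P v (tourSol P v) := by
    unfold MvFeasible FeasOn
    refine ⟨?_, ?_, ?_, ?_, ?_, ?_, ?_, ?_, ?_, ?_, ?_, ?_, ?_, ?_, ?_, ?_, ?_, ?_⟩
    · intro i _ n _; simp [tourSol]
    · intro t _ _ i _ j _ _
      simp only [tourSol]
      exact tourX_cases P.Nb i j
    · intro t _ _ i _; simp [tourSol]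
    · -- f nonneg
      intro t ht1 ht2 n hn i hi j hj hij
      have ht : t = 2 := by omega
      subst ht
      obtain ⟨hi1, hi2⟩ : 1 ≤ i ∧ i ≤ P.Nb := by
        simpa [ModelM.Ibins, Finset.mem_Icc] using hi
      simp only [tourSol]
      exact mul_nonneg (tourX_nonneg _ _ _) (hcumnn n hn i hi2)
    · -- w nonneg
      intro t ht1 ht2 n hn i hi
      have ht : t = 2 := by omega
      subst ht
      simp only [tourSol]
      exact hw0nn i hi n hn
    · -- u nonneg
      intro t _ _ n _ i hi
      simp only [tourSol]
      split
      · exact hv i hi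
      · exact le_rfl
    · -- C1
      intro t ht1 ht2 n hn i hi
      have ht : t = 2 := by omega
      subst ht
      obtain ⟨hi1, hi2⟩ : 1 ≤ i ∧ i ≤ P.Nb := by
        simpa [ModelM.Ibins, Finset.mem_Icc] using hi
      simp only [tourSol, ModelM.Iall, ModelM.Ibins]
      rw [← Finset.sum_mul, tourX_sum_out P.Nb P.hNb i hi2, one_mul]
      have hin : ∑ j ∈ (Finset.Icc 1 P.Nb).erase i,
            tourX P.Nb j i * (∑ k ∈ Finset.Icc 1 j, (v k + P.E k * P.B * P.a k 2 n))
          = if i - 1 ∈ (Finset.Icc 1 P.Nb).erase i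
              then ∑ k ∈ Finset.Icc 1 (i - 1), (v k + P.E k * P.B * P.a k 2 n) else 0 := by
        rw [Finset.sum_congr rfl (fun j _ => by
          rw [tourX_eq_pred P.Nb i P.hNb hi1 hi2 j, ite_mul, one_mul, zero_mul])]
        exact Finset.sum_ite_eq' _ _ _
      rw [hin]
      by_cases h2 : 2 ≤ i
      · rw [if_pos (by simp only [Finset.mem_erase, Finset.mem_Icc]; omega)]
        obtain ⟨m, rfl⟩ : ∃ m, i = m + 1 := ⟨i - 1, by omega⟩
        rw [Nat.add_sub_cancel, Finset.sum_Icc_succ_top (show 1 ≤ m + 1 by omega)]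
        ring
      · rw [if_neg (by simp only [Finset.mem_erase, Finset.mem_Icc]; omega)]
        have h1 : i = 1 := by omega
        subst h1
        rw [Finset.Icc_self, Finset.sum_singleton, sub_zero]
    · -- C2
      intro t ht1 ht2 n hn i hi j hj hij
      have ht : t = 2 := by omega
      subst ht
      obtain ⟨hi1, hi2⟩ : 1 ≤ i ∧ i ≤ P.Nb := by
        simpa [ModelM.Ibins, Finset.mem_Icc] using hi
      obtain ⟨hj1, hj2⟩ : 1 ≤ j ∧ j ≤ P.Nb := by
        simpa [ModelM.Ibins, Finset.mem_Icc] using hj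
      simp only [tourSol]
      by_cases h : j = succF P.Nb i
      · have hx1 : tourX P.Nb i j = 1 := by unfold tourX; rw [if_pos h]
        rw [hx1, one_mul, mul_one]
        have hji : j = i + 1 := by
          simp only [succF] at h; split_ifs at h <;> omega
        subst hji
        have h1 := hcum_le n hn i (by omega)
        have hj' : i + 1 ∈ P.Ibins := by
          simp only [ModelM.Ibins, Finset.mem_Icc]; omega
        have ha' := ha2 (i + 1) hj' n hn
        have h2' : 0 ≤ P.E (i + 1) * P.B * (1 - P.a (i + 1) 2 n) :=
          mul_nonneg (mul_nonneg (P.hE _ hj') P.hB) (by linarith [ha'.2])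
        have h3 := hEQ (i + 1) (by omega)
        rw [Finset.sum_Icc_succ_top (show 1 ≤ i + 1 by omega)] at h3
        nlinarith
      · have hx0 : tourX P.Nb i j = 0 := by unfold tourX; rw [if_neg h]
        rw [hx0, zero_mul, mul_zero]
    · -- C3
      intro t ht1 ht2 n hn i hi
      have ht : t = 2 := by omega
      subst ht
      obtain ⟨hi1, hi2⟩ : 1 ≤ i ∧ i ≤ P.Nb := by
        simpa [ModelM.Ibins, Finset.mem_Icc] using hi
      simp only [tourSol]
      by_cases h : (0:ℕ) = succF P.Nb i
      · have hx1 : tourX P.Nb i 0 = 1 := by unfold tourX; rw [if_pos h]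
        rw [hx1, one_mul, mul_one]
        exact hcumQ n hn i hi2
      · have hx0 : tourX P.Nb i 0 = 0 := by unfold tourX; rw [if_neg h]
        rw [hx0, zero_mul, mul_zero]
    · -- C4
      intro t ht1 ht2 n hn i hi j hj hij
      have ht : t = 2 := by omega
      subst ht
      obtain ⟨hi1, hi2⟩ : 1 ≤ i ∧ i ≤ P.Nb := by
        simpa [ModelM.Ibins, Finset.mem_Icc] using hi
      obtain ⟨hj1, hj2⟩ : 1 ≤ j ∧ j ≤ P.Nb := by
        simpa [ModelM.Ibins, Finset.mem_Icc] using hj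
      simp only [tourSol]
      by_cases h : j = succF P.Nb i
      · have hx1 : tourX P.Nb i j = 1 := by unfold tourX; rw [if_pos h]
        rw [hx1, one_mul]
        have hji : j = i + 1 := by
          simp only [succF] at h; split_ifs at h <;> omega
        subst hji
        have h3 := hcumQ n hn (i + 1) (by omega)
        rw [Finset.sum_Icc_succ_top (show 1 ≤ i + 1 by omega)] at h3
        linarith
      · have hx0 : tourX P.Nb i j = 0 := by unfold tourX; rw [if_neg h]
        rw [hx0, zero_mul]
        have := hwQ j hj n hn
        linarith
    · -- C5
      intro t ht1 ht2 n hn i hi j hj hij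
      have ht : t = 2 := by omega
      subst ht
      obtain ⟨hi1, hi2⟩ : 1 ≤ i ∧ i ≤ P.Nb := by
        simpa [ModelM.Ibins, Finset.mem_Icc] using hi
      simp only [tourSol]
      by_cases h : j = succF P.Nb i
      · have hx1 : tourX P.Nb i j = 1 := by unfold tourX; rw [if_pos h]
        rw [hx1, one_mul]
        have hle : v i + P.E i * P.B * P.a i 2 n
            ≤ ∑ k ∈ Finset.Icc 1 i, (v k + P.E k * P.B * P.a k 2 n) := by
          refine Finset.single_le_sum (f := fun k => v k + P.E k * P.B * P.a k 2 n)
            (fun k hk => ?_) (Finset.mem_Icc.mpr ⟨hi1, le_rfl⟩)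
          have hk' : k ∈ P.Ibins := by
            simp only [Finset.mem_Icc] at hk
            simp only [ModelM.Ibins, Finset.mem_Icc]; omega
          exact hw0nn k hk' n hn
        have : P.Mbig * (1 - 1) = 0 := by ring
        rw [this, sub_zero]
        exact hle
      · have hx0 : tourX P.Nb i j = 0 := by unfold tourX; rw [if_neg h]
        rw [hx0, zero_mul]
        have h1 := hwQ i hi n hn
        have : P.Mbig * (1 - 0) = P.Mbig := by ring
        rw [this]
        linarith
    · -- C6
      intro t _ _ i hi
      obtain ⟨hi1, hi2⟩ : 1 ≤ i ∧ i ≤ P.Nb := by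
        simpa [ModelM.Ibins, Finset.mem_Icc] using hi
      simp only [tourSol, ModelM.Iall]
      exact tourX_sum_out P.Nb P.hNb i hi2
    · -- C7
      intro t _ _ j hj
      obtain ⟨hj1, hj2⟩ : 1 ≤ j ∧ j ≤ P.Nb := by
        simpa [ModelM.Ibins, Finset.mem_Icc] using hj
      simp only [tourSol, ModelM.Iall]
      exact tourX_sum_in P.Nb P.hNb j hj1 hj2
    · -- C8
      intro t _ _
      simp only [tourSol, ModelM.Ibins]
      rw [tourX_sum_i0 P.Nb P.hNb, tourX_sum_0j P.Nb P.hNb]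
    · -- C9
      intro t ht1 ht2 n hn i hi
      have ht : t = 2 := by omega
      subst ht
      simp only [tourSol]
      rw [mul_one]
      exact hva i hi n hn
    · -- C10
      intro t ht1 ht2 n hn i hi
      have ht : t = 2 := by omega
      subst ht
      norm_num [tourSol]
    · -- C12
      intro t ht1 ht2 n hn i hi
      have ht : t = 2 := by omega
      subst ht
      simp only [tourSol]
      norm_num
    · -- C13
      intro t ht1 ht2 n hn i hi
      have ht : t = 2 := by omega
      subst ht
      simp only [tourSol]
      norm_num
      nlinarith [hva i hi n hn]
  -- the value of the tour solution
  have hval : subObj P 1 2 (tourSol P v) = target := by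
    rw [key _ hfeas]
    have h0 : ∑ n ∈ P.tree.N 2, P.tree.prob 2 n * ∑ i ∈ P.Ibins, (tourSol P v).u i 2 n
        = 0 := by
      refine Finset.sum_eq_zero fun n hn => ?_
      simp [tourSol]
    rw [h0, mul_zero, sub_zero]
  have hub : ∀ s', MvFeasible P v s' → subObj P 1 2 s' ≤ target := by
    intro s' hs'
    rw [key s' hs']
    have hXnn : 0 ≤ ∑ n ∈ P.tree.N 2, P.tree.prob 2 n * ∑ i ∈ P.Ibins, s'.u i 2 n := by
      refine Finset.sum_nonneg fun n hn =>
        mul_nonneg (hprobnn n hn) (Finset.sum_nonneg fun i hi => ?_)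
      exact hs'.2.2.2.2.2.1 2 (by norm_num) (by norm_num) n hn i hi
    linarith [mul_nonneg P.hR hXnn]
  constructor
  · exact ⟨tourSol P v, hfeas, hval,
      fun s' hs' => (hub s' hs').trans_eq hval.symm⟩
  · intro hRpos s hs hopt i hi n hn hπ
    have h1 : subObj P 1 2 s = target :=
      le_antisymm (hub s hs) (by rw [← hval]; exact hopt (tourSol P v) hfeas)
    have h2 : P.R * ∑ n' ∈ P.tree.N 2, P.tree.prob 2 n' * ∑ i' ∈ P.Ibins, s.u i' 2 n'
        = 0 := by
      have hk := key s hs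
      rw [h1] at hk
      linarith
    have h3 : ∑ n' ∈ P.tree.N 2, P.tree.prob 2 n' * ∑ i' ∈ P.Ibins, s.u i' 2 n' = 0 := by
      rcases mul_eq_zero.mp h2 with h | h
      · exact absurd h (ne_of_gt hRpos)
      · exact h
    have hunn : ∀ n' ∈ P.tree.N 2, ∀ i' ∈ P.Ibins, 0 ≤ s.u i' 2 n' :=
      fun n' hn' i' hi' => hs.2.2.2.2.2.1 2 (by norm_num) (by norm_num) n' hn' i' hi'
    have h4 : P.tree.prob 2 n * ∑ i' ∈ P.Ibins, s.u i' 2 n = 0 :=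
      (Finset.sum_eq_zero_iff_of_nonneg (fun n' hn' =>
        mul_nonneg (hprobnn n' hn')
          (Finset.sum_nonneg fun i' hi' => hunn n' hn' i' hi'))).mp h3 n hn
    have h5 : ∑ i' ∈ P.Ibins, s.u i' 2 n = 0 := by
      rcases mul_eq_zero.mp h4 with h | h
      · exact absurd h (ne_of_gt hπ)
      · exact h
    exact (Finset.sum_eq_zero_iff_of_nonneg (fun i' hi' => hunn n hn i' hi')).mp h5 i hi
end

section
/- (Theorem 1.) In model M with T ≥ 3, assume C = 0, R > 0, Q ≥ B Σ_{i∈I'} E_i, M ≥ Q, π^n > 0 for every node n, and S_i + a_i^n ≤ 1 for every i ∈ I' and every n ∈ N^2. Then for every window W with 1 ≤ W ≤ T−2, in every execution of the rolling horizon approach all subproblems are feasible and admit optimal solutions, and z^{RH,W} = z*; in particular z^{RH,W} / z* = 1 whenever z* ≠ 0. -/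
/-! ### Auxiliary development for Theorem 1 -/

namespace RHaux

open Finset

lemma mem_Ibins_iff {P : ModelM} {i : ℕ} : i ∈ P.Ibins ↔ 1 ≤ i ∧ i ≤ P.Nb := by
  simp [ModelM.Ibins]

lemma mem_Iall_iff {P : ModelM} {i : ℕ} : i ∈ P.Iall ↔ i ≤ P.Nb := by
  simp [ModelM.Iall]

/-- Successor on the cycle `0 → 1 → ⋯ → Nb → 0`. -/
def sig (P : ModelM) (i : ℕ) : ℕ := if i = P.Nb then 0 else i + 1

lemma sig_le {P : ModelM} {i : ℕ} (hi : i ≤ P.Nb) : sig P i ≤ P.Nb := by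
  unfold sig; split_ifs <;> omega

lemma sig_ne {P : ModelM} {i : ℕ} : sig P i ≠ i := by
  have := P.hNb; unfold sig; split_ifs <;> omega

/-- The `w`-values of the collect-everything solution for a window starting
at stage `k` with starting inventories `v`. -/
def caW (P : ModelM) (k : ℕ) (v : ℕ → ℕ → ℝ) (i t n : ℕ) : ℝ :=
  (if t = k + 1 then v i (P.tree.pa t n) else 0) + P.E i * P.B * P.a i t n

/-- The collect-everything solution: a fixed tour through all bins at every
stage, all bins emptied at every stage. -/
def collectAll (P : ModelM) (k : ℕ) (v : ℕ → ℕ → ℝ) : Sol where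
  x := fun i j _ => if j = sig P i ∧ i ≤ P.Nb then 1 else 0
  y := fun _ _ => 1
  f := fun i j t n => if j = sig P i ∧ i ≤ P.Nb ∧ 1 ≤ i then
        ∑ m ∈ Finset.Icc 1 i, caW P k v m t n else 0
  w := fun i t n => caW P k v i t n
  u := fun i t n => if t = k then v i n else 0

/-- Good starting inventories: nonnegative and compatible with the stage-`k+1`
accumulations (constraint (C13) at stage `k+1`). -/
def GoodInv (P : ModelM) (k : ℕ) (v : ℕ → ℕ → ℝ) : Prop :=
  (∀ i ∈ P.Ibins, ∀ n ∈ P.tree.N k, 0 ≤ v i n) ∧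
  (∀ i ∈ P.Ibins, ∀ n ∈ P.tree.N (k + 1),
    v i (P.tree.pa (k + 1) n) ≤ (1 - P.a i (k + 1) n) * (P.E i * P.B))

section caW

variable {P : ModelM} {k : ℕ} {v : ℕ → ℕ → ℝ} {i t n : ℕ}

lemma pa_mem {t n : ℕ} (h2 : 2 ≤ t) (hT : t ≤ P.T) (hn : n ∈ P.tree.N t) :
    P.tree.pa t n ∈ P.tree.N (t - 1) := P.tree.hpa t h2 hT n hn

lemma caW_nonneg (hk : 1 ≤ k) (hv : GoodInv P k v) (hi : i ∈ P.Ibins)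
    (ht1 : k + 1 ≤ t) (htT : t ≤ P.T) (hn : n ∈ P.tree.N t) :
    0 ≤ caW P k v i t n := by
  unfold caW
  have ha := P.ha i hi t (by omega) htT n hn
  have hEB : 0 ≤ P.E i * P.B := mul_nonneg (P.hE i hi) P.hB
  have h2 : 0 ≤ P.E i * P.B * P.a i t n := mul_nonneg hEB ha.1
  split_ifs with h
  · subst h
    have hpam : P.tree.pa (k+1) n ∈ P.tree.N k := by
      have := pa_mem (P := P) (by omega) htT hn
      simpa using this
    have := hv.1 i hi _ hpam
    linarith
  · linarith

lemma caW_le (hk : 1 ≤ k) (hv : GoodInv P k v) (hi : i ∈ P.Ibins)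
    (ht1 : k + 1 ≤ t) (htT : t ≤ P.T) (hn : n ∈ P.tree.N t) :
    caW P k v i t n ≤ P.E i * P.B := by
  unfold caW
  have ha := P.ha i hi t (by omega) htT n hn
  have hEB : 0 ≤ P.E i * P.B := mul_nonneg (P.hE i hi) P.hB
  split_ifs with h
  · subst h
    have := hv.2 i hi n hn
    nlinarith
  · nlinarith

lemma EBa_le_caW (hk : 1 ≤ k) (hv : GoodInv P k v) (hi : i ∈ P.Ibins)
    (ht1 : k + 1 ≤ t) (htT : t ≤ P.T) (hn : n ∈ P.tree.N t) :
    P.E i * P.B * P.a i t n ≤ caW P k v i t n := by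
  unfold caW
  split_ifs with h
  · subst h
    have hpam : P.tree.pa (k+1) n ∈ P.tree.N k := by
      have := pa_mem (P := P) (by omega) htT hn
      simpa using this
    have := hv.1 i hi _ hpam
    linarith
  · linarith

lemma sum_caW_le_Q (hQ : P.B * ∑ i ∈ P.Ibins, P.E i ≤ P.Q)
    (hk : 1 ≤ k) (hv : GoodInv P k v)
    (ht1 : k + 1 ≤ t) (htT : t ≤ P.T) (hn : n ∈ P.tree.N t)
    {s : Finset ℕ} (hs : s ⊆ P.Ibins) :
    ∑ m ∈ s, caW P k v m t n ≤ P.Q := by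
  calc ∑ m ∈ s, caW P k v m t n ≤ ∑ m ∈ s, P.E m * P.B :=
        Finset.sum_le_sum fun m hm => caW_le hk hv (hs hm) ht1 htT hn
    _ ≤ ∑ m ∈ P.Ibins, P.E m * P.B :=
        Finset.sum_le_sum_of_subset_of_nonneg hs fun m hm _ =>
          mul_nonneg (P.hE m hm) P.hB
    _ = P.B * ∑ m ∈ P.Ibins, P.E m := by rw [← Finset.sum_mul, mul_comm]
    _ ≤ P.Q := hQ

lemma EB_le_Q (hQ : P.B * ∑ i ∈ P.Ibins, P.E i ≤ P.Q) (hi : i ∈ P.Ibins) :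
    P.E i * P.B ≤ P.Q := by
  have h1 : P.E i ≤ ∑ m ∈ P.Ibins, P.E m :=
    Finset.single_le_sum (fun m hm => P.hE m hm) hi
  have := mul_le_mul_of_nonneg_right h1 P.hB
  calc P.E i * P.B ≤ (∑ m ∈ P.Ibins, P.E m) * P.B := this
    _ = P.B * ∑ m ∈ P.Ibins, P.E m := mul_comm _ _
    _ ≤ P.Q := hQ

end caW


lemma collectAll_feasible (P : ModelM)
    (hQ : P.B * ∑ i ∈ P.Ibins, P.E i ≤ P.Q) (hM : P.Q ≤ P.Mbig)
    {k l : ℕ} (hk : 1 ≤ k) (hkl : k + 1 ≤ l) (hl : l ≤ P.T)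
    {v : ℕ → ℕ → ℝ} (hv : GoodInv P k v) :
    FeasOn P k l v (collectAll P k v) := by
  have hNb := P.hNb
  -- generic facts
  have hsum_nonneg : ∀ {i t n : ℕ}, i ≤ P.Nb → k + 1 ≤ t → t ≤ P.T → n ∈ P.tree.N t →
      0 ≤ ∑ m ∈ Finset.Icc 1 i, caW P k v m t n := by
    intro i t n hi ht1 htT hn
    refine Finset.sum_nonneg fun m hm => ?_
    rw [Finset.mem_Icc] at hm
    exact caW_nonneg hk hv (mem_Ibins_iff.mpr ⟨hm.1, le_trans hm.2 hi⟩) ht1 htT hn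
  refine ⟨?_, ?_, ?_, ?_, ?_, ?_, ?_, ?_, ?_, ?_, ?_, ?_, ?_, ?_, ?_, ?_, ?_, ?_⟩
  · -- u fix
    intro i _ n _; simp [collectAll]
  · -- x binary
    intro t _ _ i _ j _ _
    simp only [collectAll]
    split_ifs
    · right; rfl
    · left; rfl
  · -- y binary
    intro t _ _ i _; right; rfl
  · -- f ≥ 0
    intro t ht1 ht2 n hn i hi j _ _
    simp only [collectAll]
    split_ifs with h
    · exact hsum_nonneg h.2.1 ht1 (le_trans ht2 hl) hn
    · exact le_refl 0
  · -- w ≥ 0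
    intro t ht1 ht2 n hn i hi
    exact caW_nonneg hk hv hi ht1 (le_trans ht2 hl) hn
  · -- u ≥ 0
    intro t _ _ n hn i hi
    simp only [collectAll]
    split_ifs with h
    · subst h; exact hv.1 i hi n hn
    · exact le_refl 0
  · -- C1
    intro t ht1 ht2 n hn i hi
    obtain ⟨hi1, hi2⟩ := mem_Ibins_iff.mp hi
    simp only [collectAll]
    have hout : (∑ j ∈ P.Iall.erase i, if j = sig P i ∧ i ≤ P.Nb ∧ 1 ≤ i then
        ∑ m ∈ Finset.Icc 1 i, caW P k v m t n else 0)
        = ∑ m ∈ Finset.Icc 1 i, caW P k v m t n := by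
      rw [Finset.sum_eq_single_of_mem (sig P i)]
      · exact if_pos ⟨rfl, hi2, hi1⟩
      · exact Finset.mem_erase.mpr ⟨sig_ne, mem_Iall_iff.mpr (sig_le hi2)⟩
      · intro j _ hne; exact if_neg fun h => hne h.1
    rw [hout]
    obtain ⟨i', rfl⟩ : ∃ i', i = i' + 1 := ⟨i - 1, by omega⟩
    by_cases hi' : 1 ≤ i'
    · have hin : (∑ j ∈ P.Ibins.erase (i' + 1), if i' + 1 = sig P j ∧ j ≤ P.Nb ∧ 1 ≤ j then
          ∑ m ∈ Finset.Icc 1 j, caW P k v m t n else 0)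
          = ∑ m ∈ Finset.Icc 1 i', caW P k v m t n := by
        rw [Finset.sum_eq_single_of_mem i']
        · rw [if_pos]
          refine ⟨?_, by omega, hi'⟩
          unfold sig; rw [if_neg (by omega)]
        · exact Finset.mem_erase.mpr ⟨by omega, mem_Ibins_iff.mpr ⟨hi', by omega⟩⟩
        · intro j hj hne
          rw [Finset.mem_erase, mem_Ibins_iff] at hj
          refine if_neg fun h => ?_
          have h1 := h.1
          unfold sig at h1; split_ifs at h1 <;> omega
      rw [hin, Finset.sum_Icc_succ_top (by omega : 1 ≤ i' + 1)]
      ring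
    · have hi0 : i' = 0 := by omega
      subst hi0
      have hin : (∑ j ∈ P.Ibins.erase 1, if 0 + 1 = sig P j ∧ j ≤ P.Nb ∧ 1 ≤ j then
          ∑ m ∈ Finset.Icc 1 j, caW P k v m t n else 0) = 0 := by
        refine Finset.sum_eq_zero fun j hj => ?_
        rw [Finset.mem_erase, mem_Ibins_iff] at hj
        refine if_neg fun h => ?_
        have h1 := h.1
        unfold sig at h1; split_ifs at h1 <;> omega
      rw [hin]
      simp
  · -- C2
    intro t ht1 ht2 n hn i hi j hj hij
    obtain ⟨hi1, hi2⟩ := mem_Ibins_iff.mp hi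
    obtain ⟨hj1, hj2⟩ := mem_Ibins_iff.mp hj
    have htT := le_trans ht2 hl
    have haj := P.ha j hj t (by omega) htT n hn
    have hEBj : 0 ≤ P.E j * P.B := mul_nonneg (P.hE j hj) P.hB
    simp only [collectAll]
    by_cases hs : j = sig P i
    · rw [if_pos ⟨hs, hi2, hi1⟩, if_pos ⟨hs, hi2⟩, mul_one]
      -- j = i + 1 (since j ≥ 1 forces i ≠ Nb)
      have hji : j = i + 1 := by
        unfold sig at hs; split_ifs at hs <;> omega
      have hnotmem : j ∉ Finset.Icc 1 i := by rw [Finset.mem_Icc]; omega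
      have hkey : ∑ m ∈ insert j (Finset.Icc 1 i), caW P k v m t n ≤ P.Q := by
        refine sum_caW_le_Q hQ hk hv ht1 htT hn ?_
        intro m hm
        rw [Finset.mem_insert, Finset.mem_Icc] at hm
        rw [mem_Ibins_iff]
        rcases hm with rfl | hm
        · exact ⟨hj1, hj2⟩
        · omega
      rw [Finset.sum_insert hnotmem] at hkey
      have hEBa := EBa_le_caW hk hv hj ht1 htT hn
      linarith
    · rw [if_neg fun h => hs h.1, if_neg fun h => hs h.1, mul_zero]
  · -- C3
    intro t ht1 ht2 n hn i hi
    obtain ⟨hi1, hi2⟩ := mem_Ibins_iff.mp hi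
    have htT := le_trans ht2 hl
    simp only [collectAll]
    by_cases hs : (0 : ℕ) = sig P i
    · rw [if_pos ⟨hs, hi2, hi1⟩, if_pos ⟨hs, hi2⟩, mul_one]
      refine sum_caW_le_Q hQ hk hv ht1 htT hn ?_
      intro m hm
      rw [Finset.mem_Icc] at hm
      rw [mem_Ibins_iff]; omega
    · rw [if_neg fun h => hs h.1, if_neg fun h => hs h.1, mul_zero]
  · -- C4
    intro t ht1 ht2 n hn i hi j hj hij
    obtain ⟨hi1, hi2⟩ := mem_Ibins_iff.mp hi
    obtain ⟨hj1, hj2⟩ := mem_Ibins_iff.mp hj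
    have htT := le_trans ht2 hl
    simp only [collectAll]
    by_cases hs : j = sig P i
    · rw [if_pos ⟨hs, hi2, hi1⟩]
      have hji : j = i + 1 := by
        unfold sig at hs; split_ifs at hs <;> omega
      have hnotmem : j ∉ Finset.Icc 1 i := by rw [Finset.mem_Icc]; omega
      have hkey : ∑ m ∈ insert j (Finset.Icc 1 i), caW P k v m t n ≤ P.Q := by
        refine sum_caW_le_Q hQ hk hv ht1 htT hn ?_
        intro m hm
        rw [Finset.mem_insert, Finset.mem_Icc] at hm
        rw [mem_Ibins_iff]
        rcases hm with rfl | hm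
        · exact ⟨hj1, hj2⟩
        · omega
      rw [Finset.sum_insert hnotmem] at hkey
      linarith
    · rw [if_neg fun h => hs h.1]
      have h1 := caW_le hk hv hj ht1 htT hn
      have h2 := EB_le_Q hQ hj
      linarith
  · -- C5
    intro t ht1 ht2 n hn i hi j hj hij
    obtain ⟨hi1, hi2⟩ := mem_Ibins_iff.mp hi
    have htT := le_trans ht2 hl
    simp only [collectAll]
    by_cases hs : j = sig P i
    · rw [if_pos (show j = sig P i ∧ i ≤ P.Nb from ⟨hs, hi2⟩),
          if_pos (show j = sig P i ∧ i ≤ P.Nb ∧ 1 ≤ i from ⟨hs, hi2, hi1⟩)]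
      have hmem : i ∈ Finset.Icc 1 i := by rw [Finset.mem_Icc]; omega
      have hsingle : caW P k v i t n ≤ ∑ m ∈ Finset.Icc 1 i, caW P k v m t n := by
        refine Finset.single_le_sum (f := fun m => caW P k v m t n) (fun m hm => ?_) hmem
        rw [Finset.mem_Icc] at hm
        exact caW_nonneg hk hv (mem_Ibins_iff.mpr ⟨hm.1, le_trans hm.2 hi2⟩) ht1 htT hn
      have : P.Mbig * (1 - (1:ℝ)) = 0 := by ring
      linarith
    · rw [if_neg fun h => hs h.1, if_neg fun h => hs h.1]
      have h1 := caW_le hk hv hi ht1 htT hn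
      have h2 := EB_le_Q hQ hi
      have : P.Mbig * (1 - (0:ℝ)) = P.Mbig := by ring
      linarith
  · -- C6
    intro t _ _ i hi
    obtain ⟨hi1, hi2⟩ := mem_Ibins_iff.mp hi
    simp only [collectAll]
    rw [Finset.sum_eq_single_of_mem (sig P i)]
    · exact if_pos ⟨rfl, hi2⟩
    · exact Finset.mem_erase.mpr ⟨sig_ne, mem_Iall_iff.mpr (sig_le hi2)⟩
    · intro j _ hne; exact if_neg fun h => hne h.1
  · -- C7
    intro t _ _ j hj
    obtain ⟨hj1, hj2⟩ := mem_Ibins_iff.mp hj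
    simp only [collectAll]
    rw [Finset.sum_eq_single_of_mem (j - 1)]
    · refine if_pos ⟨?_, by omega⟩
      unfold sig; rw [if_neg (by omega)]; omega
    · exact Finset.mem_erase.mpr ⟨by omega, mem_Iall_iff.mpr (by omega)⟩
    · intro i hi hne
      rw [Finset.mem_erase, mem_Iall_iff] at hi
      refine if_neg fun h => ?_
      have h1 := h.1
      unfold sig at h1; split_ifs at h1 <;> omega
  · -- C8
    intro t _ _
    have hNb := P.hNb
    simp only [collectAll]
    have hL : (∑ i ∈ P.Ibins, if (0:ℕ) = sig P i ∧ i ≤ P.Nb then (1:ℝ) else 0) = 1 := by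
      rw [Finset.sum_eq_single_of_mem P.Nb]
      · refine if_pos ⟨?_, le_refl _⟩
        unfold sig; rw [if_pos rfl]
      · exact mem_Ibins_iff.mpr ⟨hNb, le_refl _⟩
      · intro i hi hne
        rw [mem_Ibins_iff] at hi
        refine if_neg fun h => ?_
        have h1 := h.1
        unfold sig at h1; split_ifs at h1 <;> omega
    have hR : (∑ j ∈ P.Ibins, if j = sig P 0 ∧ (0:ℕ) ≤ P.Nb then (1:ℝ) else 0) = 1 := by
      rw [Finset.sum_eq_single_of_mem 1]
      · refine if_pos ⟨?_, by omega⟩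
        unfold sig; rw [if_neg (by omega)]
      · exact mem_Ibins_iff.mpr ⟨le_refl _, hNb⟩
      · intro j hj hne
        rw [mem_Ibins_iff] at hj
        refine if_neg fun h => ?_
        have h1 := h.1
        unfold sig at h1; rw [if_neg (by omega)] at h1; omega
    rw [hL, hR]
  · -- C9
    intro t ht1 ht2 n hn i hi
    simp only [collectAll, mul_one]
    exact caW_le hk hv hi ht1 (le_trans ht2 hl) hn
  · -- C10
    intro t ht1 ht2 n hn i hi
    simp only [collectAll]
    rw [if_neg (by omega)]
    have : P.Mbig * (1 - (1:ℝ)) = 0 := by ring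
    rw [this]
  · -- C12
    intro t ht1 ht2 n hn i hi
    simp only [collectAll, caW]
    rw [if_neg (by omega : ¬ t = k)]
    by_cases h : t = k + 1
    · rw [if_pos h, if_pos (by omega : t - 1 = k)]
      subst h; ring
    · rw [if_neg h, if_neg (by omega : ¬ t - 1 = k)]
      ring
  · -- C13
    intro t ht1 ht2 n hn i hi
    have htT := le_trans ht2 hl
    have ha := P.ha i hi t (by omega) htT n hn
    have hEB : 0 ≤ P.E i * P.B := mul_nonneg (P.hE i hi) P.hB
    simp only [collectAll]
    by_cases h : t = k + 1
    · rw [if_pos (by omega : t - 1 = k)]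
      subst h
      have := hv.2 i hi n (by simpa using hn)
      simpa using this
    · rw [if_neg (by omega : ¬ t - 1 = k)]
      nlinarith


/-- Expected accumulation rate at stage `t`. -/
def expA (P : ModelM) (i t : ℕ) : ℝ := ∑ n ∈ P.tree.N t, P.tree.prob t n * P.a i t n

/-- Expected collected amount at stage `t`. -/
def expW (P : ModelM) (s : Sol) (i t : ℕ) : ℝ :=
  ∑ n ∈ P.tree.N t, P.tree.prob t n * s.w i t n

/-- Expected inventory at stage `t`. -/
def expU (P : ModelM) (s : Sol) (i t : ℕ) : ℝ :=
  ∑ n ∈ P.tree.N t, P.tree.prob t n * s.u i t n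

lemma sum_prob_pa (P : ModelM) {t : ℕ} (h2 : 2 ≤ t) (hT : t ≤ P.T) (g : ℕ → ℝ) :
    ∑ n ∈ P.tree.N t, P.tree.prob t n * g (P.tree.pa t n)
      = ∑ m ∈ P.tree.N (t - 1), P.tree.prob (t - 1) m * g m := by
  rw [← Finset.sum_fiberwise_of_maps_to (fun n hn => P.tree.hpa t h2 hT n hn)
      (fun n => P.tree.prob t n * g (P.tree.pa t n))]
  refine Finset.sum_congr rfl fun m hm => ?_
  rw [P.tree.hprob_sum t h2 hT m hm, Finset.sum_mul]
  refine Finset.sum_congr rfl fun n hn => ?_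
  rw [Finset.mem_filter] at hn
  rw [hn.2]

lemma expU_step (P : ModelM) {k l : ℕ} {v : ℕ → ℕ → ℝ} {s : Sol}
    (hf : FeasOn P k l v s) (hk : 1 ≤ k) (hl : l ≤ P.T)
    {i t : ℕ} (hi : i ∈ P.Ibins) (ht1 : k + 1 ≤ t) (ht2 : t ≤ l) :
    expU P s i t = expU P s i (t - 1) + P.E i * P.B * expA P i t - expW P s i t := by
  obtain ⟨-, -, -, -, -, -, -, -, -, -, -, -, -, -, -, -, hc12, -⟩ := hf
  have h2t : 2 ≤ t := by omega
  have htT : t ≤ P.T := le_trans ht2 hl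
  have hcong : ∀ n ∈ P.tree.N t, P.tree.prob t n * s.u i t n
      = P.tree.prob t n * s.u i (t - 1) (P.tree.pa t n)
        + P.E i * P.B * (P.tree.prob t n * P.a i t n)
        - P.tree.prob t n * s.w i t n := by
    intro n hn
    rw [hc12 t ht1 ht2 n hn i hi]; ring
  simp only [expU, expA, expW]
  rw [Finset.sum_congr rfl hcong, Finset.sum_sub_distrib, Finset.sum_add_distrib,
      ← Finset.mul_sum, sum_prob_pa P h2t htT (s.u i (t - 1))]

lemma expW_telescope (P : ModelM) {k l : ℕ} {v : ℕ → ℕ → ℝ} {s : Sol}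
    (hf : FeasOn P k l v s) (hk : 1 ≤ k) (hl : l ≤ P.T) {i : ℕ} (hi : i ∈ P.Ibins) :
    ∀ l', k ≤ l' → l' ≤ l →
      ∑ t ∈ Finset.Icc (k + 1) l', expW P s i t
        = expU P s i k + P.E i * P.B * (∑ t ∈ Finset.Icc (k + 1) l', expA P i t)
          - expU P s i l' := by
  intro l' hkl'
  induction l', hkl' using Nat.le_induction with
  | base =>
    intro _
    rw [Finset.Icc_eq_empty (by omega)]
    simp
  | succ m hm ih =>
    intro hml
    have hstep := expU_step P hf hk hl hi (t := m + 1) (by omega) hml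
    simp only [Nat.add_sub_cancel] at hstep
    rw [Finset.sum_Icc_succ_top (by omega : k + 1 ≤ m + 1),
        Finset.sum_Icc_succ_top (by omega : k + 1 ≤ m + 1), ih (by omega), hstep]
    ring

lemma expU_nonneg (P : ModelM) {k l : ℕ} {v : ℕ → ℕ → ℝ} {s : Sol}
    (hf : FeasOn P k l v s) (hk : 1 ≤ k) (hl : l ≤ P.T)
    {i t : ℕ} (hi : i ∈ P.Ibins) (ht1 : k ≤ t) (ht2 : t ≤ l) :
    0 ≤ expU P s i t := by
  refine Finset.sum_nonneg fun n hn => mul_nonneg ?_ ?_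
  · exact P.tree.hprob_nonneg t (by omega) (by omega) n hn
  · exact hf.2.2.2.2.2.1 t ht1 ht2 n hn i hi

/-- The value of a feasible solution of the window subproblem, when `C = 0`. -/
lemma subObj_eq (P : ModelM) (hC0 : P.C = 0) {k l : ℕ} {v : ℕ → ℕ → ℝ} {s : Sol}
    (hf : FeasOn P k l v s) (hk : 1 ≤ k) (hkl : k ≤ l) (hl : l ≤ P.T) :
    subObj P k l s = P.R * ∑ i ∈ P.Ibins,
      ((∑ n ∈ P.tree.N k, P.tree.prob k n * v i n)
        + P.E i * P.B * (∑ t ∈ Finset.Icc (k + 1) l, expA P i t)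
        - expU P s i l) := by
  have hswap : ∑ t ∈ Finset.Icc (k + 1) l, ∑ n ∈ P.tree.N t,
      P.tree.prob t n * ∑ i ∈ P.Ibins, s.w i t n
      = ∑ i ∈ P.Ibins, ∑ t ∈ Finset.Icc (k + 1) l, expW P s i t := by
    simp only [Finset.mul_sum, expW]
    rw [Finset.sum_congr rfl fun t _ => (Finset.sum_comm (s := P.tree.N t) (t := P.Ibins)
      (f := fun n i => P.tree.prob t n * s.w i t n)), Finset.sum_comm]
  have hfix : ∀ i ∈ P.Ibins, expU P s i k = ∑ n ∈ P.tree.N k, P.tree.prob k n * v i n := by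
    intro i hi
    exact Finset.sum_congr rfl fun n hn => by rw [hf.1 i hi n hn]
  unfold subObj
  rw [hC0, zero_mul, sub_zero, hswap]
  congr 1
  refine Finset.sum_congr rfl fun i hi => ?_
  rw [expW_telescope P hf hk hl hi l hkl (le_refl l), hfix i hi]

lemma expU_collectAll (P : ModelM) {k l : ℕ} {v : ℕ → ℕ → ℝ} (hkl : k + 1 ≤ l) (i : ℕ) :
    expU P (collectAll P k v) i l = 0 := by
  refine Finset.sum_eq_zero fun n hn => ?_
  simp only [collectAll]
  rw [if_neg (by omega : ¬ l = k), mul_zero]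

lemma collectAll_subOptimal (P : ModelM)
    (hC0 : P.C = 0) (hQ : P.B * ∑ i ∈ P.Ibins, P.E i ≤ P.Q) (hM : P.Q ≤ P.Mbig)
    {k l : ℕ} (hk : 1 ≤ k) (hkl : k + 1 ≤ l) (hl : l ≤ P.T)
    {v : ℕ → ℕ → ℝ} (hv : GoodInv P k v) :
    SubOptimal P k l v (collectAll P k v) := by
  have hfeas := collectAll_feasible P hQ hM hk hkl hl hv
  refine ⟨hfeas, fun s' hs' => ?_⟩
  rw [subObj_eq P hC0 hs' hk (by omega) hl, subObj_eq P hC0 hfeas hk (by omega) hl]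
  refine mul_le_mul_of_nonneg_left (Finset.sum_le_sum fun i hi => ?_) P.hR
  rw [expU_collectAll P hkl]
  have := expU_nonneg P hs' hk hl hi (t := l) (by omega) (le_refl l)
  linarith

lemma optimal_terminal_zero (P : ModelM)
    (hC0 : P.C = 0) (hQ : P.B * ∑ i ∈ P.Ibins, P.E i ≤ P.Q) (hM : P.Q ≤ P.Mbig)
    (hRpos : 0 < P.R)
    (hpi : ∀ t, 1 ≤ t → t ≤ P.T → ∀ n ∈ P.tree.N t, 0 < P.tree.prob t n)
    {k l : ℕ} (hk : 1 ≤ k) (hkl : k + 1 ≤ l) (hl : l ≤ P.T)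
    {v : ℕ → ℕ → ℝ} (hv : GoodInv P k v) {s : Sol}
    (hopt : SubOptimal P k l v s) :
    ∀ i ∈ P.Ibins, ∀ n ∈ P.tree.N l, s.u i l n = 0 := by
  have hfeasCA := collectAll_feasible P hQ hM hk hkl hl hv
  have hle := hopt.2 (collectAll P k v) hfeasCA
  rw [subObj_eq P hC0 hopt.1 hk (by omega) hl, subObj_eq P hC0 hfeasCA hk (by omega) hl] at hle
  have hsum : ∑ i ∈ P.Ibins, expU P s i l ≤ 0 := by
    have h2 := le_of_mul_le_mul_left hle hRpos
    have e1 : ∀ X : ℕ → ℝ, ∑ i ∈ P.Ibins, (X i - expU P (collectAll P k v) i l)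
        = ∑ i ∈ P.Ibins, X i := by
      intro X
      refine Finset.sum_congr rfl fun i hi => ?_
      rw [expU_collectAll P hkl, sub_zero]
    rw [e1] at h2
    rw [Finset.sum_sub_distrib] at h2
    linarith
  have hnn : ∀ i ∈ P.Ibins, 0 ≤ expU P s i l :=
    fun i hi => expU_nonneg P hopt.1 hk hl hi (by omega) (le_refl l)
  have hz : ∀ i ∈ P.Ibins, expU P s i l = 0 :=
    (Finset.sum_eq_zero_iff_of_nonneg hnn).mp
      (le_antisymm hsum (Finset.sum_nonneg hnn))
  intro i hi n hn
  have hterm : ∀ m ∈ P.tree.N l, 0 ≤ P.tree.prob l m * s.u i l m := fun m hm =>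
    mul_nonneg (P.tree.hprob_nonneg l (by omega) hl m hm)
      (hopt.1.2.2.2.2.2.1 l (by omega) (le_refl l) m hm i hi)
  have h0 := (Finset.sum_eq_zero_iff_of_nonneg hterm).mp (hz i hi) n hn
  have hp := hpi l (by omega) hl n hn
  have := mul_eq_zero.mp h0
  rcases this with h | h
  · exact absurd h (ne_of_gt hp)
  · exact h

lemma rhWE_lb (P : ModelM) {W k : ℕ} (hW : 1 ≤ W) (h1 : 1 ≤ k) (hk : k ≤ P.T - 1) :
    k + 1 ≤ rhWindowEnd P W k := by
  have := P.hT; unfold rhWindowEnd; omega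

lemma rhWE_ub (P : ModelM) {W k : ℕ} (hk : k ≤ P.T - 1) :
    rhWindowEnd P W k ≤ P.T := by
  have := P.hT; unfold rhWindowEnd; omega

lemma rhInv_one (P : ModelM) (s : ℕ → Sol) :
    rhInv P s 1 = fun i _ => P.E i * P.B * P.S i := by
  unfold rhInv; rw [if_pos (le_refl 1)]

lemma rhInv_succ (P : ModelM) (s : ℕ → Sol) {k : ℕ} (hk : 1 ≤ k) :
    rhInv P s (k + 1) = fun i n => (s k).u i (k + 1) n := by
  unfold rhInv; rw [if_neg (by omega)]; simp

lemma goodInv_one (P : ModelM)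
    (hSa : ∀ i ∈ P.Ibins, ∀ n ∈ P.tree.N 2, P.S i + P.a i 2 n ≤ 1) :
    GoodInv P 1 (fun i _ => P.E i * P.B * P.S i) := by
  constructor
  · intro i hi n _
    exact mul_nonneg (mul_nonneg (P.hE i hi) P.hB) (P.hS i hi).1
  · intro i hi n hn
    have h1 := hSa i hi n (by simpa using hn)
    have hEB : 0 ≤ P.E i * P.B := mul_nonneg (P.hE i hi) P.hB
    have : P.S i ≤ 1 - P.a i 2 n := by linarith
    calc P.E i * P.B * P.S i ≤ P.E i * P.B * (1 - P.a i 2 n) :=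
          mul_le_mul_of_nonneg_left this hEB
      _ = (1 - P.a i 2 n) * (P.E i * P.B) := by ring
  -- note : `P.tree.N (1+1)` is defeq `P.tree.N 2`

lemma goodInv_rhInv (P : ModelM)
    (hC0 : P.C = 0) (hQ : P.B * ∑ i ∈ P.Ibins, P.E i ≤ P.Q) (hM : P.Q ≤ P.Mbig)
    (hRpos : 0 < P.R)
    (hpi : ∀ t, 1 ≤ t → t ≤ P.T → ∀ n ∈ P.tree.N t, 0 < P.tree.prob t n)
    (hSa : ∀ i ∈ P.Ibins, ∀ n ∈ P.tree.N 2, P.S i + P.a i 2 n ≤ 1)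
    {W : ℕ} (hW1 : 1 ≤ W) (s : ℕ → Sol) :
    ∀ k, 1 ≤ k → k ≤ P.T - 1 →
      (∀ j, 1 ≤ j → j < k → SubOptimal P j (rhWindowEnd P W j) (rhInv P s j) (s j)) →
      GoodInv P k (rhInv P s k) := by
  have hT := P.hT
  intro k hk1
  induction k, hk1 using Nat.le_induction with
  | base =>
    intro _ _
    rw [rhInv_one P s]
    exact goodInv_one P hSa
  | succ k hk ih =>
    intro hkT hprev
    have hkT' : k ≤ P.T - 1 := by omega
    have hg := ih hkT' (fun j h1 h2 => hprev j h1 (by omega))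
    have hopt := hprev k hk (by omega)
    have hl1 : k + 1 ≤ rhWindowEnd P W k := rhWE_lb P hW1 hk hkT'
    have hlT : rhWindowEnd P W k ≤ P.T := rhWE_ub P hkT'
    have hupos := hopt.1.2.2.2.2.2.1
    have hc13 := hopt.1.2.2.2.2.2.2.2.2.2.2.2.2.2.2.2.2.2
    rw [rhInv_succ P s hk]
    constructor
    · intro i hi n hn
      exact hupos (k + 1) (by omega) hl1 n hn i hi
    · intro i hi n hn
      rcases le_or_gt (k + 2) (rhWindowEnd P W k) with hcase | hcase
      · have h13 := hc13 (k + 2) (by omega) hcase n hn i hi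
        simpa using h13
      · have hleq : rhWindowEnd P W k = k + 1 := by omega
        have hzero := optimal_terminal_zero P hC0 hQ hM hRpos hpi hk hl1 hlT hg hopt
        rw [hleq] at hzero
        have hpa : P.tree.pa (k + 2) n ∈ P.tree.N (k + 1) := by
          have := P.tree.hpa (k + 2) (by omega) (by omega) n hn
          simpa using this
        have hz := hzero i hi _ hpa
        simp only [show k + 1 + 1 = k + 2 from rfl]
        rw [hz]
        have ha := P.ha i hi (k + 2) (by omega) (by omega) n hn
        have hEB : 0 ≤ P.E i * P.B := mul_nonneg (P.hE i hi) P.hB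
        nlinarith

lemma tele_Icc (g : ℕ → ℝ) : ∀ T, 1 ≤ T →
    ∑ t ∈ Finset.Icc 2 T, (g (t - 1) - g t) = g 1 - g T := by
  intro T hT
  induction T, hT using Nat.le_induction with
  | base =>
    rw [Finset.Icc_eq_empty (by omega)]
    simp
  | succ m hm ih =>
    rw [Finset.sum_Icc_succ_top (by omega : 2 ≤ m + 1), ih]
    simp only [Nat.add_sub_cancel]
    ring

/-- Expected starting inventory of iteration `t` of the rolling horizon. -/
def Fval (P : ModelM) (s : ℕ → Sol) (i t : ℕ) : ℝ :=
  ∑ n ∈ P.tree.N t, P.tree.prob t n * rhInv P s t i n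

lemma tele_F (P : ModelM) (s : ℕ → Sol) (i : ℕ) : ∀ T, 1 ≤ T →
    ∑ t ∈ Finset.Icc 2 T, (Fval P s i (t - 1) - Fval P s i t)
      = Fval P s i 1 - Fval P s i T := by
  intro T hT
  induction T, hT using Nat.le_induction with
  | base =>
    rw [Finset.Icc_eq_empty (by omega)]
    simp
  | succ m hm ih =>
    rw [Finset.sum_Icc_succ_top (by omega : 2 ≤ m + 1), ih]
    simp only [Nat.add_sub_cancel]
    ring

end RHaux


/-- Theorem 1: in model `M` with `T ≥ 3`, `C = 0`, `R > 0`,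
`Q ≥ B Σ_{i∈I'} E_i`, `M ≥ Q`, positive node probabilities and
`S_i + a_i^n ≤ 1` for every `i ∈ I'`, `n ∈ N²`, for every window
`1 ≤ W ≤ T-2`: along any execution of the rolling horizon approach every
subproblem is feasible and admits an optimal solution, and for every execution
`z^{RH,W} = z*` (the attained optimal profit of model `M`); in particular
`z^{RH,W} / z* = 1` whenever `z* ≠ 0`. -/
theorem rolling_horizon_exact_of_C_eq_zero (P : ModelM) (hT3 : 3 ≤ P.T)
    (hC0 : P.C = 0) (hRpos : 0 < P.R)
    (hQ : P.B * ∑ i ∈ P.Ibins, P.E i ≤ P.Q) (hM : P.Q ≤ P.Mbig)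
    (hpi : ∀ t, 1 ≤ t → t ≤ P.T → ∀ n ∈ P.tree.N t, 0 < P.tree.prob t n)
    (hSa : ∀ i ∈ P.Ibins, ∀ n ∈ P.tree.N 2, P.S i + P.a i 2 n ≤ 1)
    (W : ℕ) (hW1 : 1 ≤ W) (hW2 : W ≤ P.T - 2) :
    (∀ (s : ℕ → Sol) (k : ℕ), 1 ≤ k → k ≤ P.T - 1 →
        (∀ j, 1 ≤ j → j < k →
          SubOptimal P j (rhWindowEnd P W j) (rhInv P s j) (s j)) →
        (∃ s' : Sol, FeasOn P k (rhWindowEnd P W k) (rhInv P s k) s') ∧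
        (∃ s' : Sol, SubOptimal P k (rhWindowEnd P W k) (rhInv P s k) s')) ∧
    (∀ s : ℕ → Sol, IsExecution P W s →
        ∃ zstar : ℝ,
          (∃ sopt : Sol, Feasible P sopt ∧ profit P sopt = zstar) ∧
          (∀ s' : Sol, Feasible P s' → profit P s' ≤ zstar) ∧
          zRH P s = zstar ∧ (zstar ≠ 0 → zRH P s / zstar = 1)) := by
  classical
  have hT := P.hT
  have hpart : ∀ (s : ℕ → Sol) (k : ℕ), 1 ≤ k → k ≤ P.T - 1 →
      (∀ j, 1 ≤ j → j < k → SubOptimal P j (rhWindowEnd P W j) (rhInv P s j) (s j)) →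
      SubOptimal P k (rhWindowEnd P W k) (rhInv P s k)
        (RHaux.collectAll P k (rhInv P s k)) := by
    intro s k hk1 hkT hprev
    exact RHaux.collectAll_subOptimal P hC0 hQ hM hk1
      (RHaux.rhWE_lb P hW1 hk1 hkT) (RHaux.rhWE_ub P hkT)
      (RHaux.goodInv_rhInv P hC0 hQ hM hRpos hpi hSa hW1 s k hk1 hkT hprev)
  refine ⟨fun s k hk1 hkT hprev =>
    ⟨⟨_, (hpart s k hk1 hkT hprev).1⟩, ⟨_, hpart s k hk1 hkT hprev⟩⟩, ?_⟩
  intro s hexec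
  have hg1 : RHaux.GoodInv P 1 (fun i _ => P.E i * P.B * P.S i) := RHaux.goodInv_one P hSa
  have hfg : Feasible P (RHaux.collectAll P 1 (fun i _ => P.E i * P.B * P.S i)) :=
    RHaux.collectAll_feasible P hQ hM (le_refl 1) (by omega) (le_refl _) hg1
  have hIcc : Finset.Icc (1 + 1) P.T = Finset.Icc 2 P.T := by norm_num
  have hroot_sum : ∀ g : ℕ → ℝ,
      ∑ n ∈ P.tree.N 1, P.tree.prob 1 n * g n = g P.tree.root := by
    intro g
    rw [P.tree.hroot, Finset.sum_singleton, P.tree.hprob_root, one_mul]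
  -- the optimal value
  set zst : ℝ := P.R * ∑ i ∈ P.Ibins,
      (P.E i * P.B * P.S i + P.E i * P.B * ∑ t ∈ Finset.Icc 2 P.T, RHaux.expA P i t)
    with hzst
  have hval : ∀ s' : Sol, Feasible P s' → profit P s'
      = P.R * ∑ i ∈ P.Ibins, (P.E i * P.B * P.S i
          + P.E i * P.B * ∑ t ∈ Finset.Icc 2 P.T, RHaux.expA P i t
          - RHaux.expU P s' i P.T) := by
    intro s' hs'
    have h := RHaux.subObj_eq P hC0 hs' (le_refl 1) (by omega) (le_refl _)
    rw [hIcc] at h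
    unfold profit
    rw [h]
    congr 1
    refine Finset.sum_congr rfl fun i hi => ?_
    rw [hroot_sum (fun _ => P.E i * P.B * P.S i)]
  have hub : ∀ s' : Sol, Feasible P s' → profit P s' ≤ zst := by
    intro s' hs'
    rw [hval s' hs', hzst]
    refine mul_le_mul_of_nonneg_left (Finset.sum_le_sum fun i hi => ?_) P.hR
    have := RHaux.expU_nonneg P hs' (le_refl 1) (le_refl _) hi (by omega) (le_refl _)
    linarith
  have hattain : profit P (RHaux.collectAll P 1 (fun i _ => P.E i * P.B * P.S i)) = zst := by
    rw [hval _ hfg, hzst]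
    congr 1
    refine Finset.sum_congr rfl fun i hi => ?_
    rw [RHaux.expU_collectAll P (by omega : 1 + 1 ≤ P.T)]
    ring
  -- the rolling horizon value equals zst
  have hFT : ∀ i ∈ P.Ibins, RHaux.Fval P s i P.T = 0 := by
    intro i hi
    have hk1 : 1 ≤ P.T - 1 := by omega
    have hopt := hexec (P.T - 1) hk1 (le_refl _)
    have hle : rhWindowEnd P W (P.T - 1) = P.T := by unfold rhWindowEnd; omega
    have hg := RHaux.goodInv_rhInv P hC0 hQ hM hRpos hpi hSa hW1 s (P.T - 1) hk1 (le_refl _)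
      (fun j hj1 hj2 => hexec j hj1 (by omega))
    have hzero := RHaux.optimal_terminal_zero P hC0 hQ hM hRpos hpi hk1
      (RHaux.rhWE_lb P hW1 hk1 (le_refl _)) (RHaux.rhWE_ub P (le_refl _)) hg hopt
    rw [hle] at hzero
    have hsub : P.T - 1 + 1 = P.T := by omega
    have hrw := RHaux.rhInv_succ P s hk1
    rw [hsub] at hrw
    unfold RHaux.Fval
    refine Finset.sum_eq_zero fun n hn => ?_
    simp only [hrw]
    rw [hzero i hi n hn, mul_zero]
  have hF1 : ∀ i : ℕ, RHaux.Fval P s i 1 = P.E i * P.B * P.S i := by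
    intro i
    unfold RHaux.Fval
    simp only [RHaux.rhInv_one P s]
    rw [hroot_sum (fun _ => P.E i * P.B * P.S i)]
  have hstepEq : ∀ i ∈ P.Ibins, ∀ t ∈ Finset.Icc 2 P.T,
      RHaux.expW P (s (t - 1)) i t
        = (RHaux.Fval P s i (t - 1) - RHaux.Fval P s i t)
          + P.E i * P.B * RHaux.expA P i t := by
    intro i hi t ht
    rw [Finset.mem_Icc] at ht
    obtain ⟨k, rfl⟩ : ∃ k, t = k + 1 := ⟨t - 1, by omega⟩
    have hk1 : 1 ≤ k := by omega
    have hkT : k ≤ P.T - 1 := by omega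
    have hopt := hexec k hk1 hkT
    have hfeas := hopt.1
    have hstep := RHaux.expU_step P hfeas hk1 (RHaux.rhWE_ub P hkT) hi
      (le_refl (k + 1)) (RHaux.rhWE_lb P hW1 hk1 hkT)
    simp only [Nat.add_sub_cancel] at hstep ⊢
    have hFk : RHaux.expU P (s k) i k = RHaux.Fval P s i k := by
      unfold RHaux.expU RHaux.Fval
      exact Finset.sum_congr rfl fun n hn => by rw [hfeas.1 i hi n hn]
    have hFk1 : RHaux.expU P (s k) i (k + 1) = RHaux.Fval P s i (k + 1) := by
      unfold RHaux.expU RHaux.Fval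
      simp only [RHaux.rhInv_succ P s hk1]
    rw [hFk, hFk1] at hstep
    linarith
  have hzrh : zRH P s = zst := by
    have hswap : ∑ t ∈ Finset.Icc 2 P.T, ∑ n ∈ P.tree.N t,
        P.tree.prob t n * ∑ i ∈ P.Ibins, (s (t - 1)).w i t n
        = ∑ i ∈ P.Ibins, ∑ t ∈ Finset.Icc 2 P.T, RHaux.expW P (s (t - 1)) i t := by
      simp only [Finset.mul_sum, RHaux.expW]
      rw [Finset.sum_congr rfl fun t _ => (Finset.sum_comm (s := P.tree.N t) (t := P.Ibins)
        (f := fun n i => P.tree.prob t n * (s (t - 1)).w i t n)), Finset.sum_comm]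
    have hsum_i : ∀ i ∈ P.Ibins, ∑ t ∈ Finset.Icc 2 P.T, RHaux.expW P (s (t - 1)) i t
        = P.E i * P.B * P.S i
          + P.E i * P.B * ∑ t ∈ Finset.Icc 2 P.T, RHaux.expA P i t := by
      intro i hi
      rw [Finset.sum_congr rfl (fun t ht => hstepEq i hi t ht), Finset.sum_add_distrib,
          ← Finset.mul_sum, RHaux.tele_F P s i P.T (by omega), hFT i hi, hF1 i, sub_zero]
    unfold zRH
    rw [hC0, zero_mul, sub_zero, hswap, Finset.sum_congr rfl hsum_i, hzst]
  exact ⟨zst, ⟨_, hfg, hattain⟩, hub, hzrh, fun h => by rw [hzrh]; exact div_self h⟩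
end
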